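/- arXiv:math/0309014 — 12 statements merged into one kernel-verified Lean document; each statement's English description precedes it below -/
import Mathlib

section
/- Let X be a Banach space, Y a normed space, and T : X → Y a bounded linear operator. Suppose there exist a constant K > 0 and 0 < ε < 1 such that B_Y ⊆ K·T(B_X) + ε·B_Y, where B_X and B_Y denote the closed unit balls. Then T is a surjective open map, and Y is complete. -/
/-!
Writing `y = K • T x + ε • y'` with `x`, `y'` in the unit balls says that `T (K • x)` approximates
`y` up to an error of norm at most `ε`. Iterating on the errors, whose norms decay like `εⁿ`, and
summing the approximate preimages in the Banach space `X` produces an exact preimage of norm at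
most `K / (1 - ε) · ‖y‖`. Such a controlled right inverse makes `T` open, and it transports
convergence of absolutely summable series from `X` to `Y`, so `Y` is complete.
-/

open Filter Finset Metric Topology

namespace ContinuousLinearMap

section

variable {R X Y : Type*} [Semiring R] [NormedAddCommGroup X] [NormedAddCommGroup Y]
  [Module R X] [Module R Y] (T : X →L[R] Y)

theorem exists_preimage_norm_le_of_approx [CompleteSpace X] {K ε : ℝ}
    (hK : 0 ≤ K) (hε0 : 0 ≤ ε) (hε1 : ε < 1)
    (h : ∀ y, ∃ x, ‖x‖ ≤ K * ‖y‖ ∧ ‖y - T x‖ ≤ ε * ‖y‖) (y : Y) :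
    ∃ x, T x = y ∧ ‖x‖ ≤ K / (1 - ε) * ‖y‖ := by
  choose g hg_norm hg_approx using h
  set r : ℕ → Y := fun n => (fun z => z - T (g z))^[n] y
  have hr_succ (n : ℕ) : r (n + 1) = r n - T (g (r n)) := Function.iterate_succ_apply' _ _ _
  have hr_norm (n : ℕ) : ‖r n‖ ≤ ε ^ n * ‖y‖ := by
    induction n with
    | zero => simp [r]
    | succ n ih =>
      calc ‖r (n + 1)‖ ≤ ε * ‖r n‖ := hr_succ n ▸ hg_approx _
        _ ≤ ε * (ε ^ n * ‖y‖) := by gcongr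
        _ = ε ^ (n + 1) * ‖y‖ := by ring
  have hg_geom (n : ℕ) : ‖g (r n)‖ ≤ K * ‖y‖ * ε ^ n :=
    calc ‖g (r n)‖ ≤ K * ‖r n‖ := hg_norm _
      _ ≤ K * (ε ^ n * ‖y‖) := by gcongr; exact hr_norm n
      _ = K * ‖y‖ * ε ^ n := by ring
  have hgeom : HasSum (fun n => K * ‖y‖ * ε ^ n) (K * ‖y‖ * (1 - ε)⁻¹) :=
    (hasSum_geometric_of_lt_one hε0 hε1).mul_left _
  have hsum : Summable fun n => g (r n) := .of_norm_bounded hgeom.summable hg_geom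
  have hpartial (n : ℕ) : T (∑ k ∈ range n, g (r k)) = y - r n := by
    induction n with
    | zero => simp [r]
    | succ n ih => rw [sum_range_succ, map_add, ih, hr_succ]; abel
  have hr_lim : Tendsto r atTop (𝓝 0) := by
    refine squeeze_zero_norm hr_norm ?_
    simpa using (tendsto_pow_atTop_nhds_zero_of_lt_one hε0 hε1).mul_const ‖y‖
  refine ⟨∑' n, g (r n), tendsto_nhds_unique
    ((T.continuous.tendsto _).comp hsum.hasSum.tendsto_sum_nat) ?_, ?_⟩
  · simpa [Function.comp_def, hpartial] using (tendsto_const_nhds (x := y)).sub hr_lim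
  · calc ‖∑' n, g (r n)‖ ≤ K * ‖y‖ * (1 - ε)⁻¹ := tsum_of_norm_bounded hgeom hg_geom
      _ = K / (1 - ε) * ‖y‖ := by ring

theorem isOpenMap_of_exists_preimage_norm_le {C : ℝ} (hC : 0 < C)
    (hT : ∀ y, ∃ x, T x = y ∧ ‖x‖ ≤ C * ‖y‖) : IsOpenMap T := by
  refine fun U hU => isOpen_iff.2 ?_
  rintro _ ⟨x₀, hx₀, rfl⟩
  obtain ⟨δ, hδ, hball⟩ := isOpen_iff.1 hU x₀ hx₀
  refine ⟨δ / C, div_pos hδ hC, fun y hy => ?_⟩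
  obtain ⟨x, hx, hx_norm⟩ := hT (y - T x₀)
  refine ⟨x₀ + x, hball ?_, by rw [map_add, hx, add_sub_cancel]⟩
  rw [mem_ball, dist_eq_norm] at hy ⊢
  calc ‖x₀ + x - x₀‖ = ‖x‖ := by rw [add_sub_cancel_left]
    _ ≤ C * ‖y - T x₀‖ := hx_norm
    _ < C * (δ / C) := by gcongr
    _ = δ := mul_div_cancel₀ _ hC.ne'

theorem completeSpace_of_exists_preimage_norm_le [CompleteSpace X] {C : ℝ}
    (hT : ∀ y, ∃ x, T x = y ∧ ‖x‖ ≤ C * ‖y‖) : CompleteSpace Y := by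
  refine NormedAddCommGroup.completeSpace_of_summable_imp_tendsto fun u hu => ?_
  choose v hTv hv using fun n => hT (u n)
  have hsum : Summable v := .of_norm_bounded (hu.mul_left C) hv
  refine ⟨T (∑' n, v n), ?_⟩
  simpa [Function.comp_def, ← hTv, map_sum] using
    (T.continuous.tendsto _).comp hsum.hasSum.tendsto_sum_nat

end

theorem exists_approx_preimage_norm_le_of_closedBall {𝕜 X Y : Type*} [RCLike 𝕜]
    [NormedAddCommGroup X] [NormedSpace 𝕜 X] [NormedAddCommGroup Y] [NormedSpace 𝕜 Y]
    (T : X →L[𝕜] Y) {K ε : ℝ} (h : ∀ y ∈ closedBall (0 : Y) 1, ∃ x, ‖x‖ ≤ K ∧ ‖y - T x‖ ≤ ε)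
    (y : Y) : ∃ x, ‖x‖ ≤ K * ‖y‖ ∧ ‖y - T x‖ ≤ ε * ‖y‖ := by
  rcases eq_or_ne y 0 with rfl | hy
  · exact ⟨0, by simp⟩
  set c : 𝕜 := (‖y‖ : 𝕜)
  have hc : c ≠ 0 := by simpa [c] using hy
  have hc_norm : ‖c‖ = ‖y‖ := by simp [c]
  obtain ⟨x, hx, hxy⟩ := h (c⁻¹ • y) (by simp [norm_smul, hc_norm, hy])
  refine ⟨c • x, ?_, ?_⟩
  · rw [norm_smul, hc_norm, mul_comm]; gcongr
  · have : y - T (c • x) = c • (c⁻¹ • y - T x) := by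
      rw [smul_sub, smul_inv_smul₀ hc, map_smul]
    rw [this, norm_smul, hc_norm, mul_comm ε]; gcongr

end ContinuousLinearMap

open ContinuousLinearMap in
/-- **Open Mapping Lemma.** Let `X` be a Banach space, `Y` a normed space, and
`T : X → Y` a bounded linear operator.  Suppose there are `K > 0` and `0 < ε < 1` with
`B_Y ⊆ K·T(B_X) + ε·B_Y`.  Then `T` is a surjective open map and `Y` is complete. -/
theorem stmt_0 {𝕜 X Y : Type*} [RCLike 𝕜]
    [NormedAddCommGroup X] [NormedSpace 𝕜 X] [CompleteSpace X]
    [NormedAddCommGroup Y] [NormedSpace 𝕜 Y]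
    (T : X →L[𝕜] Y) (K ε : ℝ) (hK : 0 < K) (hε0 : 0 < ε) (hε1 : ε < 1)
    (h : Metric.closedBall (0 : Y) 1 ⊆
        {z : Y | ∃ x ∈ Metric.closedBall (0 : X) 1, ∃ y ∈ Metric.closedBall (0 : Y) 1,
          z = (K : 𝕜) • T x + (ε : 𝕜) • y}) :
    Function.Surjective T ∧ IsOpenMap T ∧ CompleteSpace Y := by
  have happrox (y) (hy : y ∈ closedBall (0 : Y) 1) : ∃ x, ‖x‖ ≤ K ∧ ‖y - T x‖ ≤ ε := by
    obtain ⟨x, hx, y', hy', rfl⟩ := h hy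
    rw [mem_closedBall_zero_iff] at hx hy'
    refine ⟨(K : 𝕜) • x, ?_, ?_⟩
    · simpa [norm_smul, abs_of_pos hK] using mul_le_mul_of_nonneg_left hx hK.le
    · simpa [norm_smul, abs_of_pos hε0] using mul_le_mul_of_nonneg_left hy' hε0.le
  have hlift := exists_preimage_norm_le_of_approx T hK.le hε0.le hε1
    (exists_approx_preimage_norm_le_of_closedBall T happrox)
  exact ⟨fun y => (hlift y).imp fun _ => And.left,
    isOpenMap_of_exists_preimage_norm_le T (div_pos hK (sub_pos.2 hε1)) hlift,
    completeSpace_of_exists_preimage_norm_le T hlift⟩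
end

section
/- Let X be a Banach space, 𝔄 a norm-closed subalgebra of L(X), and x₀ ∈ X a nonzero vector. The following are equivalent: (1) x₀ is strictly cyclic for 𝔄, i.e. 𝔄x₀ = X; (2) there is a constant C > 0 such that for every y in the closed unit ball of X there is an operator A ∈ 𝔄 with ‖A‖ ≤ C and Ax₀ = y; (3) there exist C > 0 and 0 < ε < 1 such that for every y in the closed unit ball of X there is an operator A ∈ 𝔄 with ‖A‖ ≤ C and ‖y − Ax₀‖ < ε. -/
/-!
Evaluation at `x₀` is a continuous linear map `ev` from the Banach space `𝔄` onto `𝔄x₀`, so (1)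
says that `ev` is surjective. The open mapping theorem then gives preimages of controlled norm,
which is (2). Conversely, (3) says that `ev` maps the `C`-ball onto an `ε`-net of the unit ball;
by homogeneity every `y` is then approximated to within `ε ‖y‖`, and correcting the residual
again and again produces a series in `𝔄`, convergent by the geometric bound `ε ^ n`, whose sum
is an exact preimage of `y`.
-/

open Metric Filter Topology

namespace ContinuousLinearMap

variable {E F : Type*} [NormedAddCommGroup E] [NormedAddCommGroup F]

theorem surjective_of_forall_approx_preimage {𝕜 : Type*} [NormedField 𝕜] [NormedSpace 𝕜 E]
    [NormedSpace 𝕜 F] [CompleteSpace E] (f : E →L[𝕜] F) {C ε : ℝ}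
    (hε₀ : 0 ≤ ε) (hε₁ : ε < 1) (h : ∀ y, ∃ x, ‖x‖ ≤ C * ‖y‖ ∧ ‖y - f x‖ ≤ ε * ‖y‖) :
    Function.Surjective f := by
  choose g hg_norm hg_approx using h
  intro y
  set r : ℕ → F := fun n => (fun z => z - f (g z))^[n] y
  have hr_succ (n : ℕ) : r (n + 1) = r n - f (g (r n)) := Function.iterate_succ_apply' _ _ _
  have hr_norm (n : ℕ) : ‖r n‖ ≤ ε ^ n * ‖y‖ := by
    induction n with
    | zero => simp [r]
    | succ n ih =>
      calc ‖r (n + 1)‖ ≤ ε * ‖r n‖ := hr_succ n ▸ hg_approx _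
        _ ≤ ε * (ε ^ n * ‖y‖) := by gcongr
        _ = ε ^ (n + 1) * ‖y‖ := by ring
  have hu : Summable fun n => g (r n) := by
    refine .of_norm_bounded
      ((summable_geometric_of_lt_one hε₀ hε₁).mul_left (|C| * ‖y‖)) fun n => ?_
    calc ‖g (r n)‖ ≤ C * ‖r n‖ := hg_norm _
      _ ≤ |C| * (ε ^ n * ‖y‖) := by gcongr; exacts [le_abs_self C, hr_norm n]
      _ = |C| * ‖y‖ * ε ^ n := by ring
  have hpartial (n : ℕ) : f (∑ i ∈ Finset.range n, g (r i)) = y - r n := by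
    induction n with
    | zero => simp [r]
    | succ n ih => rw [Finset.sum_range_succ, map_add, ih, hr_succ]; abel
  have hr_lim : Tendsto r atTop (𝓝 0) := by
    refine squeeze_zero_norm hr_norm ?_
    simpa using (tendsto_pow_atTop_nhds_zero_of_lt_one hε₀ hε₁).mul_const ‖y‖
  have hlim := (f.continuous.tendsto _).comp hu.hasSum.tendsto_sum_nat
  simp only [Function.comp_def, hpartial] at hlim
  refine ⟨∑' n, g (r n), tendsto_nhds_unique hlim ?_⟩
  simpa using tendsto_const_nhds.sub hr_lim

theorem forall_approx_preimage_of_closedBall {𝕜 : Type*} [RCLike 𝕜] [NormedSpace 𝕜 E]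
    [NormedSpace 𝕜 F] (f : E →L[𝕜] F) {C ε : ℝ}
    (h : ∀ y ∈ closedBall (0 : F) 1, ∃ x, ‖x‖ ≤ C ∧ ‖y - f x‖ < ε) (y : F) :
    ∃ x, ‖x‖ ≤ C * ‖y‖ ∧ ‖y - f x‖ ≤ ε * ‖y‖ := by
  rcases eq_or_ne y 0 with rfl | hy
  · exact ⟨0, by simp⟩
  have hy' : (‖y‖ : 𝕜) ≠ 0 := RCLike.ofReal_ne_zero.2 (norm_ne_zero_iff.2 hy)
  obtain ⟨x, hx, hfx⟩ := h ((‖y‖ : 𝕜)⁻¹ • y) (by simp [norm_smul, hy])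
  refine ⟨(‖y‖ : 𝕜) • x, ?_, ?_⟩
  · rw [norm_smul, RCLike.norm_ofReal, abs_norm, mul_comm]
    gcongr
  · have hdiff : y - f ((‖y‖ : 𝕜) • x) = (‖y‖ : 𝕜) • ((‖y‖ : 𝕜)⁻¹ • y - f x) := by
      rw [smul_sub, smul_inv_smul₀ hy', map_smul]
    rw [hdiff, norm_smul, RCLike.norm_ofReal, abs_norm, mul_comm]
    gcongr

end ContinuousLinearMap

theorem stmt_1_general {𝕜 X : Type*} [RCLike 𝕜]
    [NormedAddCommGroup X] [NormedSpace 𝕜 X] [CompleteSpace X]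
    (𝔄 : NonUnitalSubalgebra 𝕜 (X →L[𝕜] X))
    (hclosed : IsClosed (𝔄 : Set (X →L[𝕜] X)))
    (x₀ : X) :
    List.TFAE [
      ∀ y : X, ∃ A ∈ 𝔄, A x₀ = y,
      ∃ C > 0, ∀ y ∈ Metric.closedBall (0 : X) 1, ∃ A ∈ 𝔄, ‖A‖ ≤ C ∧ A x₀ = y,
      ∃ C > 0, ∃ ε : ℝ, 0 < ε ∧ ε < 1 ∧
        ∀ y ∈ Metric.closedBall (0 : X) 1, ∃ A ∈ 𝔄, ‖A‖ ≤ C ∧ ‖y - A x₀‖ < ε] := by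
  have : CompleteSpace 𝔄.toSubmodule := hclosed.completeSpace_coe
  let ev : 𝔄.toSubmodule →L[𝕜] X :=
    (ContinuousLinearMap.apply 𝕜 X x₀).comp 𝔄.toSubmodule.subtypeL
  tfae_have 1 → 2 := by
    intro h
    have hsurj : Function.Surjective ev := fun y =>
      let ⟨A, hA, hAy⟩ := h y; ⟨⟨A, hA⟩, hAy⟩
    obtain ⟨C, hC, hpre⟩ := ContinuousLinearMap.exists_preimage_norm_le
      (𝕜 := 𝕜) (E := 𝔄.toSubmodule) (F := X) ev hsurj
    refine ⟨C, hC, fun y hy => ?_⟩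
    obtain ⟨A, hAy, hA⟩ := hpre y
    exact ⟨A, A.2, hA.trans (mul_le_of_le_one_right hC.le (mem_closedBall_zero_iff.1 hy)), hAy⟩
  tfae_have 2 → 3 := fun ⟨C, hC, h⟩ => ⟨C, hC, 1 / 2, by norm_num, by norm_num, fun y hy =>
    let ⟨A, hA, hAC, hAy⟩ := h y hy; ⟨A, hA, hAC, by simp [hAy]⟩⟩
  tfae_have 3 → 1 := by
    rintro ⟨C, -, ε, hε₀, hε₁, h⟩ y
    have hball : ∀ y ∈ closedBall (0 : X) 1, ∃ A, ‖A‖ ≤ C ∧ ‖y - ev A‖ < ε := fun y hy =>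
      let ⟨A, hA, hAC, hAy⟩ := h y hy; ⟨⟨A, hA⟩, hAC, hAy⟩
    have happrox := ContinuousLinearMap.forall_approx_preimage_of_closedBall
      (𝕜 := 𝕜) (E := 𝔄.toSubmodule) (F := X) ev hball
    obtain ⟨A, hAy⟩ := ContinuousLinearMap.surjective_of_forall_approx_preimage
      (𝕜 := 𝕜) (E := 𝔄.toSubmodule) (F := X) ev hε₀.le hε₁ happrox y
    exact ⟨A, A.2, hAy⟩
  tfae_finish

/-- Let `X` be a Banach space, `𝔄` a norm-closed subalgebra of `L(X)`, and `x₀ ≠ 0`.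
TFAE: (1) `x₀` is strictly cyclic (`𝔄x₀ = X`); (2) there is `C > 0` such that every `y`
in the closed unit ball is `A x₀` with `A ∈ 𝔄`, `‖A‖ ≤ C`; (3) there are `C > 0` and
`0 < ε < 1` such that every `y` in the closed unit ball is approximated to within `ε`
by some `A x₀` with `A ∈ 𝔄`, `‖A‖ ≤ C`. -/
theorem stmt_1 {𝕜 X : Type*} [RCLike 𝕜]
    [NormedAddCommGroup X] [NormedSpace 𝕜 X] [CompleteSpace X]
    (𝔄 : NonUnitalSubalgebra 𝕜 (X →L[𝕜] X))
    (hclosed : IsClosed (𝔄 : Set (X →L[𝕜] X)))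
    (x₀ : X) (hx₀ : x₀ ≠ 0) :
    List.TFAE [
      ∀ y : X, ∃ A ∈ 𝔄, A x₀ = y,
      ∃ C > 0, ∀ y ∈ Metric.closedBall (0 : X) 1, ∃ A ∈ 𝔄, ‖A‖ ≤ C ∧ A x₀ = y,
      ∃ C > 0, ∃ ε : ℝ, 0 < ε ∧ ε < 1 ∧
        ∀ y ∈ Metric.closedBall (0 : X) 1, ∃ A ∈ 𝔄, ‖A‖ ≤ C ∧ ‖y - A x₀‖ < ε] :=
  stmt_1_general 𝔄 hclosed x₀
end

section
/- Let X be a Banach space and 𝔄 a norm-closed subalgebra of L(X). Then the set of strictly cyclic vectors for 𝔄 is open in X. -/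
/-!
Surjective operators between Banach spaces form an open set: near a surjective `T`, the open
mapping theorem gives preimages `T x = y` with `‖x‖ ≤ C ‖y‖`, which solve `S x = y` up to an
error `≤ ‖y‖ / 2` once `‖S - T‖ < 1 / (2C)`, and iterating the correction converges. The strictly
cyclic vectors are the preimage of this open set under the continuous map `x ↦ (A ↦ A x)` from
`X` to `L(𝔄, X)`, and `𝔄` is a Banach space because it is closed.
-/

open Filter Function

namespace ContinuousLinearMap

variable {𝕜 E F : Type*} [NontriviallyNormedField 𝕜]
  [NormedAddCommGroup E] [NormedSpace 𝕜 E] [CompleteSpace E]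
  [NormedAddCommGroup F] [NormedSpace 𝕜 F]

theorem surjective_of_approx_preimage (f : E →L[𝕜] F) {C r : ℝ} (hC : 0 ≤ C)
    (hr₀ : 0 ≤ r) (hr₁ : r < 1) (happrox : ∀ y, ∃ x, ‖x‖ ≤ C * ‖y‖ ∧ ‖y - f x‖ ≤ r * ‖y‖) :
    Surjective f := by
  choose g hg using happrox
  intro y
  -- `err^[n] y` is what is left to solve after `n` corrections, `u n` the `n`-th correction.
  set err : F → F := fun z => z - f (g z)
  set u : ℕ → E := fun n => g (err^[n] y)
  have err_le : ∀ n, ‖err^[n] y‖ ≤ r ^ n * ‖y‖ := by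
    intro n
    induction n with
    | zero => simp
    | succ n ih =>
      rw [iterate_succ_apply', pow_succ', mul_assoc]
      exact (hg _).2.trans (by gcongr)
  have u_le : ∀ n, ‖u n‖ ≤ C * ‖y‖ * r ^ n := fun n =>
    calc ‖u n‖ ≤ C * ‖err^[n] y‖ := (hg _).1
      _ ≤ C * (r ^ n * ‖y‖) := by gcongr; exact err_le n
      _ = C * ‖y‖ * r ^ n := by ring
  have u_summable : Summable u :=
    Summable.of_norm_bounded ((summable_geometric_of_lt_one hr₀ hr₁).mul_left _) u_le
  have f_partial_sum : ∀ n, f (∑ i ∈ Finset.range n, u i) = y - err^[n] y := by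
    intro n
    induction n with
    | zero => simp
    | succ n ih => rw [Finset.sum_range_succ, map_add, ih, iterate_succ_apply', sub_add]
  have err_tendsto : Tendsto (fun n => err^[n] y) atTop (nhds 0) := by
    refine squeeze_zero_norm err_le ?_
    simpa using (tendsto_pow_atTop_nhds_zero_of_lt_one hr₀ hr₁).mul_const ‖y‖
  refine ⟨∑' n, u n, tendsto_nhds_unique ?_ (by simpa using tendsto_const_nhds.sub err_tendsto)⟩
  simpa only [comp_def, f_partial_sum] using
    (f.continuous.tendsto _).comp u_summable.hasSum.tendsto_sum_nat

theorem isOpen_setOf_surjective [CompleteSpace F] : IsOpen {f : E →L[𝕜] F | Surjective f} := by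
  refine Metric.isOpen_iff.2 fun f hf => ?_
  obtain ⟨C, hC, hpre⟩ := exists_preimage_norm_le f hf
  refine ⟨1 / (2 * C), by positivity, fun g hg => ?_⟩
  refine g.surjective_of_approx_preimage hC.le (r := 1 / 2) (by norm_num) (by norm_num) fun y => ?_
  obtain ⟨x, rfl, hx⟩ := hpre y
  refine ⟨x, hx, ?_⟩
  calc ‖f x - g x‖ = ‖(f - g) x‖ := rfl
    _ ≤ ‖f - g‖ * ‖x‖ := (f - g).le_opNorm x
    _ ≤ 1 / (2 * C) * (C * ‖f x‖) := by
        gcongr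
        rw [← dist_eq_norm, dist_comm]
        exact hg.le
    _ = 1 / 2 * ‖f x‖ := by field_simp

end ContinuousLinearMap

/-- Let `X` be a Banach space and `𝔄` a norm-closed subalgebra of `L(X)`.  Then the set
of strictly cyclic vectors for `𝔄` (those `x` with `𝔄x = X`) is open in `X`. -/
theorem stmt_2 {𝕜 X : Type*} [RCLike 𝕜]
    [NormedAddCommGroup X] [NormedSpace 𝕜 X] [CompleteSpace X]
    (𝔄 : NonUnitalSubalgebra 𝕜 (X →L[𝕜] X))
    (hclosed : IsClosed (𝔄 : Set (X →L[𝕜] X))) :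
    IsOpen {x : X | ∀ y : X, ∃ A ∈ 𝔄, A x = y} := by
  let M := NonUnitalSubalgebra.toSubmodule 𝔄
  have : CompleteSpace M := hclosed.completeSpace_coe
  -- The implicit arguments of `flip` must be given: unification does not match the subtype
  -- topology of `M` with its normed one.
  let orbitMap : X →L[𝕜] M →L[𝕜] X :=
    ContinuousLinearMap.flip (E := M) (F := X) (G := X) (σ₁₃ := .id 𝕜) (σ₂₃ := .id 𝕜) M.subtypeL
  have hset : {x : X | ∀ y : X, ∃ A ∈ 𝔄, A x = y} = orbitMap ⁻¹' {T | Surjective T} := by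
    ext x
    refine ⟨fun h y => ?_, fun h y => ?_⟩
    · obtain ⟨A, hA, rfl⟩ := h y
      exact ⟨⟨A, hA⟩, rfl⟩
    · obtain ⟨A, rfl⟩ := h y
      exact ⟨A, A.2, rfl⟩
  rw [hset]
  exact (ContinuousLinearMap.isOpen_setOf_surjective (𝕜 := 𝕜) (E := M) (F := X)).preimage
    orbitMap.continuous
end

section
/- (Lambert) Let X be a complex Banach space and 𝔄 a transitive subalgebra of L(X) that possesses a strictly cyclic vector. Then 𝔄 is dense in L(X) in the weak operator topology. -/
/-!
Replace `𝔄` by its norm closure `S`: it is still transitive and `x₀` is still strictly cyclic.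
By the open mapping theorem every `z` is `A x₀` with `A ∈ S`, `‖A‖ ≤ K ‖z‖`. Hence if `t ∈ S`
has `‖t‖ < 1`, the vector `x₀ - t x₀` is strictly cyclic (compose with `(1 - t)⁻¹`, a Neumann
series, on the right), and as every orbit comes that close to `x₀`, every nonzero vector is
strictly cyclic. So `X` is a simple module over the unital algebra generated by `S`, and its
commutant is `ℂ`: a linear map `φ` commuting with `S` is bounded, because `φ (A x₀) = A (φ x₀)`,
and for `λ` in its (nonempty) spectrum Schur's lemma forces `λ - φ = 0`. Jacobson's density
theorem then interpolates every operator on finitely many vectors by an element of `S`, and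
approximating that element in norm by elements of `𝔄` gives WOT-density.
-/

theorem NonUnitalSubalgebra.mul_mem_of_mem_adjoin {R E : Type*} [CommSemiring R] [Semiring E]
    [Algebra R E] (S : NonUnitalSubalgebra R E) {a r : E} (ha : a ∈ S)
    (hr : r ∈ Algebra.adjoin R (S : Set E)) : a * r ∈ S := by
  induction hr using Algebra.adjoin_induction generalizing a with
  | mem r hr => exact mul_mem ha hr
  | algebraMap c => simpa [Algebra.algebraMap_eq_smul_one] using SMulMemClass.smul_mem c ha
  | add r r' _ _ h h' => simpa [mul_add] using add_mem (h ha) (h' ha)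
  | mul r r' _ _ h h' => simpa [mul_assoc] using h' (h ha)

section General

variable {𝕜 X : Type*} [NontriviallyNormedField 𝕜] [NormedAddCommGroup X] [NormedSpace 𝕜 X]

def IsStrictlyCyclic (S : NonUnitalSubalgebra 𝕜 (X →L[𝕜] X)) (x : X) : Prop :=
  ∀ y, ∃ A ∈ S, A x = y

variable {S : NonUnitalSubalgebra 𝕜 (X →L[𝕜] X)}

namespace IsStrictlyCyclic

variable {x : X}

theorem of_apply {A : X →L[𝕜] X} (hA : A ∈ S) (h : IsStrictlyCyclic S (A x)) :
    IsStrictlyCyclic S x := fun z ↦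
  let ⟨B, hB, hBz⟩ := h z
  ⟨B * A, mul_mem hB hA, hBz⟩

variable [CompleteSpace X] (hS : IsClosed (S : Set (X →L[𝕜] X)))
include hS

theorem exists_norm_le (hx : IsStrictlyCyclic S x) :
    ∃ K > 0, ∀ z, ∃ A ∈ S, A x = z ∧ ‖A‖ ≤ K * ‖z‖ := by
  have : CompleteSpace S.toSubmodule := hS.completeSpace_coe
  obtain ⟨K, hK, h⟩ := ((ContinuousLinearMap.apply 𝕜 X x).comp S.toSubmodule.subtypeL
    ).exists_preimage_norm_le fun z ↦ let ⟨A, hA, hAz⟩ := hx z; ⟨⟨A, hA⟩, hAz⟩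
  exact ⟨K, hK, fun z ↦ let ⟨A, hAz, hAn⟩ := h z; ⟨A, A.2, hAz, hAn⟩⟩

theorem sub_apply (hx : IsStrictlyCyclic S x) {t : X →L[𝕜] X} (ht : t ∈ S) (ht1 : ‖t‖ < 1) :
    IsStrictlyCyclic S (x - t x) := by
  intro z
  obtain ⟨A, hA, rfl⟩ := hx z
  have hsum := summable_geometric_of_norm_lt_one ht1
  refine ⟨A * ∑' n, t ^ n, ?_, ?_⟩
  · rw [← hsum.tsum_mul_left]
    refine tsum_mem hS fun n ↦ ?_
    induction n with
    | zero => simpa using hA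
    | succ n ih => simpa [pow_succ, ← mul_assoc] using mul_mem ih ht
  · calc (A * ∑' n, t ^ n) (x - t x) = (A * ((∑' n, t ^ n) * (1 - t))) x := by simp [mul_sub]
      _ = A x := by rw [geom_series_mul_neg t ht1, mul_one]

theorem of_dense_orbit {x₀ : X} (hx₀ : IsStrictlyCyclic S x₀)
    (hx : Dense {y | ∃ A ∈ S, A x = y}) : IsStrictlyCyclic S x := by
  obtain ⟨K, hK, hbound⟩ := hx₀.exists_norm_le hS
  obtain ⟨_, ⟨A, hA, rfl⟩, hAx⟩ :=
    hx.exists_mem_open Metric.isOpen_ball ((Metric.nonempty_ball (x := x₀)).2 (inv_pos.2 hK))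
  obtain ⟨t, ht, htx, htn⟩ := hbound (x₀ - A x)
  have ht1 : ‖t‖ < 1 := calc
    ‖t‖ ≤ K * ‖x₀ - A x‖ := htn
    _ < K * K⁻¹ := by gcongr; rwa [← dist_eq_norm, dist_comm]
    _ = 1 := mul_inv_cancel₀ hK.ne'
  refine of_apply hA ?_
  simpa [htx] using hx₀.sub_apply hS ht ht1

end IsStrictlyCyclic

section Density

variable (hS : ∀ x ≠ 0, IsStrictlyCyclic S x)
include hS

theorem eq_zero_or_bijective_of_commute (C : X →ₗ[𝕜] X)
    (hC : ∀ A ∈ S, ∀ u, C (A u) = A (C u)) : C = 0 ∨ Function.Bijective C := by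
  by_cases hinj : Function.Injective C
  · refine .inr ⟨hinj, fun z ↦ ?_⟩
    rcases eq_or_ne z 0 with rfl | hz
    · exact ⟨0, map_zero C⟩
    obtain ⟨A, hA, hAz⟩ := hS (C z) ((map_ne_zero_iff C hinj).2 hz) z
    exact ⟨A z, (hC A hA z).trans hAz⟩
  · obtain ⟨u, hCu, hu⟩ : ∃ u, C u = 0 ∧ u ≠ 0 := by
      simpa [injective_iff_map_eq_zero] using hinj
    refine .inl (LinearMap.ext fun v ↦ ?_)
    obtain ⟨A, hA, rfl⟩ := hS u hu v
    rw [hC A hA, hCu, map_zero, LinearMap.zero_apply]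

variable [Nontrivial X]

theorem isSimpleModule_adjoin : IsSimpleModule (Algebra.adjoin 𝕜 (S : Set (X →L[𝕜] X))) X := by
  refine isSimpleModule_iff_toSpanSingleton_surjective.2 ⟨inferInstance, fun x hx y ↦ ?_⟩
  obtain ⟨A, hA, hAy⟩ := hS x hx y
  exact ⟨⟨A, Algebra.subset_adjoin hA⟩, hAy⟩

variable
  (hcomm : ∀ φ : X →ₗ[𝕜] X, (∀ A ∈ S, ∀ u, φ (A u) = A (φ u)) → ∃ c : 𝕜, ∀ u, φ u = c • u)
include hcomm

theorem exists_mem_adjoin_eqOn (P : X →ₗ[𝕜] X) {ι : Type*} [Fintype ι] (v : ι → X) :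
    ∃ r ∈ Algebra.adjoin 𝕜 (S : Set (X →L[𝕜] X)), ∀ i, r (v i) = P (v i) := by
  classical
  let R := Algebra.adjoin 𝕜 (S : Set (X →L[𝕜] X))
  have := isSimpleModule_adjoin hS
  have hscalar (φ : Module.End R X) : ∃ c : 𝕜, ∀ u, φ u = c • u :=
    hcomm { toFun := φ
            map_add' := φ.map_add
            map_smul' := fun c u ↦ φ.map_smul (algebraMap 𝕜 R c) u }
      fun A hA u ↦ φ.map_smul ⟨A, Algebra.subset_adjoin hA⟩ u
  let f : Module.End (Module.End R X) X :=
    { toFun := P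
      map_add' := P.map_add
      map_smul' := fun φ u ↦ by
        obtain ⟨c, hc⟩ := hscalar φ
        simp [Module.End.smul_def, hc] }
  obtain ⟨r, hr⟩ := jacobson_density f (Finset.univ.image v)
  exact ⟨r, r.2, fun i ↦ (hr (v i) (Finset.mem_image_of_mem v (Finset.mem_univ i))).symm⟩

theorem exists_mem_eqOn_of_commutant (T : X →ₗ[𝕜] X) {s : Set X} (hs : s.Finite) :
    ∃ A ∈ S, Set.EqOn A T s := by
  let W := Submodule.span 𝕜 s
  have : FiniteDimensional 𝕜 W := FiniteDimensional.span_of_finite 𝕜 hs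
  let b := Module.finBasis 𝕜 W
  obtain ⟨u, hu⟩ := exists_ne (0 : X)
  -- `A = ∑ B k * r k`, where `r k` acts on the basis as the rank-one map `w ↦ (coord k w) • u`
  -- and `B k` sends `u` to `T (b k)`; the left factors `B k` bring `A` back from `adjoin S` to `S`.
  choose φ hφ using fun k ↦ LinearMap.exists_extend (b.coord k)
  choose B hBS hB using fun k ↦ hS u hu (T (b k))
  choose r hrR hr using fun k ↦
    exists_mem_adjoin_eqOn hS hcomm ((φ k).smulRight u) fun j ↦ (b j : X)
  refine ⟨∑ k, B k * r k, sum_mem fun k _ ↦ S.mul_mem_of_mem_adjoin (hBS k) (hrR k), ?_⟩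
  have hφb (k j) : φ k (b j) = if j = k then 1 else 0 := by
    simpa [Finsupp.single_apply] using LinearMap.congr_fun (hφ k) (b j)
  have hAb (j) : (∑ k, B k * r k) (b j) = T (b j) := by
    simp [hr, hφb, apply_ite (B _), hB]
  have : (∑ k, B k * r k : X →L[𝕜] X).toLinearMap ∘ₗ W.subtype = T ∘ₗ W.subtype := b.ext hAb
  exact fun x hx ↦ LinearMap.congr_fun this ⟨x, Submodule.subset_span hx⟩

end Density

end General

section Complex

variable {X : Type*} [NormedAddCommGroup X] [NormedSpace ℂ X] [CompleteSpace X]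
  {S : NonUnitalSubalgebra ℂ (X →L[ℂ] X)} (hS : IsClosed (S : Set (X →L[ℂ] X))) {x₀ : X}
  (hx₀ : IsStrictlyCyclic S x₀)
include hS hx₀

theorem exists_eq_smul_of_commute [Nontrivial X] (htr : ∀ x ≠ 0, IsStrictlyCyclic S x)
    (φ : X →ₗ[ℂ] X) (hφ : ∀ A ∈ S, ∀ u, φ (A u) = A (φ u)) : ∃ c : ℂ, ∀ u, φ u = c • u := by
  obtain ⟨K, -, hK⟩ := hx₀.exists_norm_le hS
  have hbound (u : X) : ‖φ u‖ ≤ K * ‖φ x₀‖ * ‖u‖ := by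
    obtain ⟨A, hA, rfl, hAn⟩ := hK u
    calc ‖φ (A x₀)‖ = ‖A (φ x₀)‖ := by rw [hφ A hA]
      _ ≤ ‖A‖ * ‖φ x₀‖ := A.le_opNorm _
      _ ≤ K * ‖A x₀‖ * ‖φ x₀‖ := by gcongr
      _ = K * ‖φ x₀‖ * ‖A x₀‖ := by ring
  obtain ⟨c, hc⟩ := spectrum.nonempty (φ.mkContinuous _ hbound)
  refine ⟨c, fun u ↦ ?_⟩
  rcases eq_zero_or_bijective_of_commute htr (c • LinearMap.id - φ)
    (fun A hA u ↦ by simp [hφ A hA]) with h | h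
  · have : c • u - φ u = 0 := by simpa using LinearMap.congr_fun h u
    exact (sub_eq_zero.1 this).symm
  · refine absurd (ContinuousLinearMap.isUnit_iff_bijective.2 ?_) (spectrum.mem_iff.1 hc)
    convert h using 1
    ext v
    simp

theorem exists_mem_eqOn_of_dense_orbit (htr : ∀ x ≠ 0, Dense {y | ∃ A ∈ S, A x = y})
    (T : X →ₗ[ℂ] X) {s : Set X} (hs : s.Finite) : ∃ A ∈ S, Set.EqOn A T s := by
  rcases subsingleton_or_nontrivial X with _ | _
  · exact ⟨0, zero_mem S, fun _ _ ↦ Subsingleton.elim _ _⟩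
  have hstrict : ∀ x ≠ 0, IsStrictlyCyclic S x := fun x hx ↦ hx₀.of_dense_orbit hS (htr x hx)
  exact exists_mem_eqOn_of_commutant hstrict
    (fun φ hφ ↦ exists_eq_smul_of_commute hS hx₀ hstrict φ hφ) T hs

end Complex

/-- **(Lambert)** Let `X` be a complex Banach space and `𝔄` a transitive subalgebra of
`L(X)` possessing a strictly cyclic vector.  Then `𝔄` is WOT-dense in `L(X)`: for every
`T ∈ L(X)`, `ε > 0`, and finite families `x₁,…,x_m ∈ X`, `f₁,…,f_m ∈ X*` there is
`A ∈ 𝔄` with `|fᵢ(T xᵢ − A xᵢ)| < ε` for all `i`. -/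
theorem stmt_3 {X : Type*} [NormedAddCommGroup X] [NormedSpace ℂ X] [CompleteSpace X]
    (𝔄 : NonUnitalSubalgebra ℂ (X →L[ℂ] X))
    (htrans : ∀ x : X, x ≠ 0 → Dense {y : X | ∃ A ∈ 𝔄, A x = y})
    (x₀ : X) (hsc : ∀ y : X, ∃ A ∈ 𝔄, A x₀ = y) :
    ∀ (T : X →L[ℂ] X) (ε : ℝ), 0 < ε →
      ∀ (m : ℕ) (x : Fin m → X) (f : Fin m → (X →L[ℂ] ℂ)),
        ∃ A ∈ 𝔄, ∀ i, ‖f i (T (x i) - A (x i))‖ < ε := by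
  intro T ε hε m x f
  have horbit (v : X) : {y | ∃ A ∈ 𝔄, A v = y} ⊆ {y | ∃ A ∈ 𝔄.topologicalClosure, A v = y} :=
    fun _ ⟨A, h, e⟩ ↦ ⟨A, 𝔄.le_topologicalClosure h, e⟩
  obtain ⟨A, hA, hAx⟩ := exists_mem_eqOn_of_dense_orbit 𝔄.isClosed_topologicalClosure
    (fun y ↦ horbit x₀ (hsc y)) (fun v hv ↦ (htrans v hv).mono (horbit v)) T (Set.finite_range x)
  let U : Set (X →L[ℂ] X) := ⋂ i, {B | ‖f i (T (x i) - B (x i))‖ < ε}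
  have hU : IsOpen U := isOpen_iInter_of_finite fun i ↦ isOpen_lt (by fun_prop) continuous_const
  have hAU : A ∈ U := Set.mem_iInter.2 fun i ↦ by simpa [hAx (Set.mem_range_self i)] using hε
  obtain ⟨B, hBU, hB⟩ := mem_closure_iff.1 hA U hU hAU
  exact ⟨B, hB, fun i ↦ Set.mem_iInter.1 hBU i⟩
end

section
/- Let X be a Banach space, Y a normed space, and T : Y → X a semi-embedding, i.e. T is a bounded one-to-one linear operator such that T(B_Y) is closed in X, where B_Y is the closed unit ball of Y. Then Y is complete. -/
open Pointwise

/-- Let `X` be a Banach space, `Y` a normed space, and `T : Y → X` a semi-embedding,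
i.e. a bounded injective linear operator such that `T(B_Y)` is closed in `X`.
Then `Y` is complete. -/
theorem stmt_7 {𝕜 X Y : Type*} [RCLike 𝕜]
    [NormedAddCommGroup X] [NormedSpace 𝕜 X] [CompleteSpace X]
    [NormedAddCommGroup Y] [NormedSpace 𝕜 Y]
    (T : Y →L[𝕜] X) (hinj : Function.Injective T)
    (hcl : IsClosed (T '' Metric.closedBall (0 : Y) 1)) :
    CompleteSpace Y := by
  -- scaled balls have closed image
  have hcl' : ∀ ε : ℝ, 0 < ε → IsClosed (T '' Metric.closedBall (0 : Y) ε) := by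
    intro ε hε
    have hne : (ε : 𝕜) ≠ 0 := by
      simpa using ne_of_gt hε
    have hnorm : ‖(ε : 𝕜)‖ = ε := by
      rw [RCLike.norm_ofReal, abs_of_pos hε]
    have h1 : Metric.closedBall (0 : Y) ε = (ε : 𝕜) • Metric.closedBall (0 : Y) 1 := by
      ext y
      constructor
      · intro hy
        refine ⟨(ε : 𝕜)⁻¹ • y, ?_, smul_inv_smul₀ hne y⟩
        rw [Metric.mem_closedBall, dist_zero_right] at hy ⊢
        rw [norm_smul, norm_inv, hnorm]
        rw [inv_mul_le_iff₀ hε]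
        simpa using hy
      · rintro ⟨z, hz, rfl⟩
        rw [Metric.mem_closedBall, dist_zero_right] at hz ⊢
        rw [norm_smul, hnorm]
        nlinarith
    have h2 : T '' Metric.closedBall (0 : Y) ε
        = (ε : 𝕜) • (T '' Metric.closedBall (0 : Y) 1) := by
      rw [h1]
      exact Set.image_smul_comm T (ε : 𝕜) _ (fun c => by simp)
    rw [h2]
    exact (isClosedMap_smul_of_ne_zero hne) _ hcl
  refine Metric.complete_of_cauchySeq_tendsto ?_
  intro u hu
  -- T ∘ u is Cauchy, hence converges
  have hTu : CauchySeq (T ∘ u) := T.uniformContinuous.comp_cauchySeq hu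
  obtain ⟨x, hx⟩ := cauchySeq_tendsto_of_complete hTu
  -- key: for each ε > 0, eventually T (u n) - x = T z with ‖z‖ ≤ ε
  have key : ∀ ε : ℝ, 0 < ε → ∃ N, ∀ n ≥ N, ∃ z : Y, ‖z‖ ≤ ε ∧ T z = T (u n) - x := by
    intro ε hε
    obtain ⟨N, hN⟩ := Metric.cauchySeq_iff.mp hu ε hε
    refine ⟨N, fun n hn => ?_⟩
    have htend : Filter.Tendsto (fun m => T (u n) - T (u m)) Filter.atTop
        (nhds (T (u n) - x)) := by
      exact Filter.Tendsto.const_sub _ hx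
    have hmem : T (u n) - x ∈ T '' Metric.closedBall (0 : Y) ε := by
      refine (hcl' ε hε).mem_of_tendsto htend ?_
      filter_upwards [Filter.eventually_ge_atTop N] with m hm
      refine ⟨u n - u m, ?_, by simp [map_sub]⟩
      rw [Metric.mem_closedBall, dist_zero_right]
      exact le_of_lt (by simpa [dist_eq_norm] using hN n hn m hm)
    obtain ⟨z, hz, hzeq⟩ := hmem
    exact ⟨z, by simpa [Metric.mem_closedBall, dist_zero_right] using hz, hzeq⟩
  -- get the limit y
  obtain ⟨N₁, hN₁⟩ := key 1 one_pos
  obtain ⟨z₁, _, hz₁⟩ := hN₁ N₁ le_rfl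
  refine ⟨u N₁ - z₁, ?_⟩
  have hTy : T (u N₁ - z₁) = x := by
    rw [map_sub, hz₁]; abel
  rw [Metric.tendsto_atTop]
  intro ε hε
  obtain ⟨N, hN⟩ := key (ε / 2) (by linarith)
  refine ⟨N, fun n hn => ?_⟩
  obtain ⟨z, hznorm, hzeq⟩ := hN n hn
  have : z = u n - (u N₁ - z₁) := by
    apply hinj
    rw [hzeq, map_sub, hTy]
  rw [dist_eq_norm, ← this]
  linarith
end

section
/- Let X be a Banach space and W a bounded, circled (i.e. λW ⊆ W whenever |λ| ≤ 1), closed, convex subset of X with empty interior. Then for every ε > 0 the set W_ε = {x ∈ X : dist(x, W) ≤ ε} contains no ball of radius larger than ε. -/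
/-!
A circled convex `W` is symmetric, hence so is its thickening, and a ball inside a symmetric convex
set can be recentred at the origin. If `W` is closed and convex and `closedBall 0 r ⊆ thickening ρ W`,
then separating a point `y ∉ W` from `W` by a functional `f` with `f < u` on `W` gives
`f ≤ u + ρ‖f‖` on `closedBall 0 r`, hence `(r - ρ)‖f‖ ≤ u < f y`, which forces `‖y‖ > r - ρ`.
So a ball of radius `r > ε` in `W_ε` puts a ball of positive radius around `0` inside `W`.
-/

open Metric Set

theorem neg_mem_thickening_of_forall_neg_mem {X : Type*} [SeminormedAddCommGroup X] {W : Set X}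
    (hW : ∀ w ∈ W, -w ∈ W) {ρ : ℝ} {x : X} (hx : x ∈ thickening ρ W) : -x ∈ thickening ρ W := by
  obtain ⟨w, hw, hxw⟩ := mem_thickening_iff.1 hx
  exact mem_thickening_iff.2 ⟨-w, hW w hw, by rwa [dist_neg_neg]⟩

section

variable {X : Type*} [NormedAddCommGroup X] [NormedSpace ℝ X]

theorem Convex.closedBall_zero_subset_of_closedBall_subset {C : Set X} (hC : Convex ℝ C)
    (hneg : ∀ x ∈ C, -x ∈ C) {c : X} {r : ℝ} (h : closedBall c r ⊆ C) :
    closedBall 0 r ⊆ C := by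
  intro x hx
  rw [mem_closedBall_zero_iff] at hx
  have hadd : c + x ∈ C := h (by simpa [dist_eq_norm] using hx)
  have hsub : x - c ∈ C := by
    simpa using hneg _ (h (by simpa [dist_eq_norm] using hx : c - x ∈ closedBall c r))
  convert hC hadd hsub (by norm_num : (0 : ℝ) ≤ 1 / 2) (by norm_num : (0 : ℝ) ≤ 1 / 2)
    (by norm_num) using 1
  module

theorem ContinuousLinearMap.mul_norm_le_of_forall_closedBall_le (f : StrongDual ℝ X) {r C : ℝ}
    (hr : 0 < r) (h : ∀ x ∈ closedBall (0 : X) r, f x ≤ C) : r * ‖f‖ ≤ C := by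
  have habs : ∀ x ∈ closedBall (0 : X) r, ‖f x‖ ≤ C := fun x hx ↦ by
    have hneg := h (-x) (by simpa using hx)
    rw [map_neg] at hneg
    exact abs_le.2 ⟨by linarith, h x hx⟩
  have := f.opNorm_bound_of_ball_bound hr C habs
  rwa [le_div_iff₀ hr, mul_comm] at this

theorem closedBall_sub_subset_of_closedBall_subset_thickening {W : Set X} (hconv : Convex ℝ W)
    (hclosed : IsClosed W) {r ρ : ℝ} (hr : 0 < r) (h : closedBall 0 r ⊆ thickening ρ W) :
    closedBall 0 (r - ρ) ⊆ W := by
  intro y hy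
  by_contra hyW
  obtain ⟨f, u, hfW, hfy⟩ := geometric_hahn_banach_closed_point hconv hclosed hyW
  have hball : ∀ x ∈ closedBall (0 : X) r, f x ≤ u + ρ * ‖f‖ := fun x hx ↦ by
    obtain ⟨w, hw, hxw⟩ := mem_thickening_iff.1 (h hx)
    calc f x = f w + f (x - w) := by simp
      _ ≤ u + ‖f‖ * ‖x - w‖ := add_le_add (hfW w hw).le ((le_abs_self _).trans (f.le_opNorm _))
      _ ≤ u + ρ * ‖f‖ := by
        rw [mul_comm, ← dist_eq_norm]
        gcongr
  have hnorm := f.mul_norm_le_of_forall_closedBall_le hr hball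
  have hy' : ‖y‖ ≤ r - ρ := mem_closedBall_zero_iff.1 hy
  have : f y ≤ u := calc
    f y ≤ ‖f‖ * ‖y‖ := (le_abs_self _).trans (f.le_opNorm y)
    _ ≤ ‖f‖ * (r - ρ) := by gcongr
    _ ≤ u := by linarith
  linarith

end

theorem stmt_8_general {𝕜 X : Type*} [RCLike 𝕜]
    [NormedAddCommGroup X] [NormedSpace ℝ X] [NormedSpace 𝕜 X]
    (W : Set X)
    (hcircled : ∀ c : 𝕜, ‖c‖ ≤ 1 → ∀ w ∈ W, c • w ∈ W)
    (hclosed : IsClosed W) (hconv : Convex ℝ W)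
    (hint : interior W = ∅)
    (ε : ℝ) (hε : 0 < ε) (c : X) (r : ℝ) (hr : ε < r) :
    ¬ Metric.closedBall c r ⊆ {x : X | EMetric.infEdist x W ≤ ENNReal.ofReal ε} := by
  intro h
  have hneg : ∀ w ∈ W, -w ∈ W := fun w hw ↦ by simpa using hcircled (-1) (by simp) w hw
  obtain ⟨ρ, hερ, hρr⟩ := exists_between hr
  have hc : closedBall c r ⊆ thickening ρ W :=
    h.trans (cthickening_subset_thickening' (by linarith) (by linarith) W)
  have h0 : closedBall 0 r ⊆ thickening ρ W :=
    (hconv.thickening ρ).closedBall_zero_subset_of_closedBall_subset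
      (fun _ ↦ neg_mem_thickening_of_forall_neg_mem hneg) hc
  have hW : closedBall 0 (r - ρ) ⊆ W :=
    closedBall_sub_subset_of_closedBall_subset_thickening hconv hclosed (by linarith) h0
  have : (0 : X) ∈ interior W :=
    mem_interior_iff_mem_nhds.2 (Filter.mem_of_superset (closedBall_mem_nhds 0 (by linarith)) hW)
  simp [hint] at this

/-- Let `X` be a Banach space (real or complex, with scalar field `𝕜`) and `W` a bounded,
circled, closed, convex subset of `X` with empty interior.  Then for every `ε > 0` the set
`W_ε = {x : dist(x, W) ≤ ε}` contains no ball of radius larger than `ε`.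
(The distance to `W` is expressed via `infEdist`, which equals `∞` for `W = ∅`,
matching the convention `inf ∅ = ∞`.) -/
theorem stmt_8 {𝕜 X : Type*} [RCLike 𝕜]
    [NormedAddCommGroup X] [NormedSpace ℝ X] [NormedSpace 𝕜 X] [IsScalarTower ℝ 𝕜 X]
    [CompleteSpace X]
    (W : Set X) (hbdd : Bornology.IsBounded W)
    (hcircled : ∀ c : 𝕜, ‖c‖ ≤ 1 → ∀ w ∈ W, c • w ∈ W)
    (hclosed : IsClosed W) (hconv : Convex ℝ W)
    (hint : interior W = ∅)
    (ε : ℝ) (hε : 0 < ε) (c : X) (r : ℝ) (hr : ε < r) :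
    ¬ Metric.closedBall c r ⊆ {x : X | EMetric.infEdist x W ≤ ENNReal.ofReal ε} :=
  stmt_8_general W hcircled hclosed hconv hint ε hε c r hr
end

section
/- Let X be a Banach space and (W_n) a nested increasing sequence (W_n ⊆ W_{n+1}) of closed, convex, bounded, circled subsets of X, each with empty interior, such that Y = ⋃_{n=1}^∞ W_n is dense in X. Then for every u ∈ X \ Y there exists v ∈ X \ Y such that limsup_{n→∞} dist(v, W_n)/dist(u, W_n) = ∞ and liminf_{n→∞} dist(v, W_n)/dist(u, W_n) = 0. -/
/-!
Baire category. Each `W n` is closed with empty interior, so `X \ ⋃ W n` is residual. For a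
fixed threshold and a fixed tail `n ≥ N`, "the ratio exceeds `M` for some `n ≥ N`" and "the
ratio is below `δ` for some `n ≥ N`" are open conditions on `v`. The second is dense because
`⋃ W n` is dense and the ratio vanishes on `W n`. The first is dense because a closed convex set
with empty interior has, within `ε` of any point, a point at distance `> ε / 4` from it
(Hahn–Banach), while `dist(u, W n) → 0`. Countably many residual conditions hold simultaneously
on a residual set, which is nonempty since `X` is a Baire space.
-/

open Metric Filter Set

section FarPoint

variable {X : Type*} [NormedAddCommGroup X] [NormedSpace ℝ X]

lemma ContinuousLinearMap.exists_norm_le_one_and_half_opNorm_le (f : StrongDual ℝ X) :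
    ∃ g : X, ‖g‖ ≤ 1 ∧ ‖f‖ / 2 ≤ f g := by
  rcases eq_or_ne f 0 with rfl | hf
  · exact ⟨0, by simp⟩
  obtain ⟨g, hg, hfg⟩ := f.exists_lt_apply_of_lt_opNorm (half_lt_self (norm_pos_iff.mpr hf))
  rcases le_or_gt 0 (f g) with h | h
  · rw [Real.norm_of_nonneg h] at hfg
    exact ⟨g, hg.le, hfg.le⟩
  · rw [Real.norm_eq_abs, abs_of_neg h] at hfg
    exact ⟨-g, by rw [norm_neg]; exact hg.le, by rw [map_neg]; exact hfg.le⟩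

lemma ContinuousLinearMap.sub_le_opNorm_mul_infDist (f : StrongDual ℝ X) {C : Set X}
    (hC : C.Nonempty) {σ : ℝ} (hfC : ∀ w ∈ C, f w ≤ σ) (z : X) :
    f z - σ ≤ ‖f‖ * infDist z C := by
  have : Nonempty C := hC.to_subtype
  rw [infDist_eq_iInf, Real.mul_iInf_of_nonneg (norm_nonneg f)]
  refine le_ciInf fun ⟨w, hw⟩ => ?_
  calc f z - σ ≤ f z - f w := by linarith [hfC w hw]
    _ ≤ ‖f (z - w)‖ := by rw [map_sub]; exact le_abs_self _
    _ ≤ ‖f‖ * dist z w := by rw [dist_eq_norm]; exact f.le_opNorm _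

theorem exists_dist_lt_and_lt_infDist {C : Set X} (hCc : IsClosed C) (hCv : Convex ℝ C)
    (hCne : C.Nonempty) (hCi : interior C = ∅) (s : X) {ε : ℝ} (hε : 0 < ε) :
    ∃ x, dist x s < ε ∧ ε / 4 < infDist x C := by
  obtain ⟨x, hxs, hxC⟩ : ∃ x ∈ ball s (ε / 2), x ∉ C := not_subset.mp fun h => by
    simpa [hCi] using mem_interior.mpr ⟨_, h, isOpen_ball, mem_ball_self (half_pos hε)⟩
  obtain ⟨f, σ, hfC, hfx⟩ := geometric_hahn_banach_closed_point hCv hCc hxC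
  obtain ⟨g, hg, hfg⟩ := f.exists_norm_le_one_and_half_opNorm_le
  have hf : 0 < ‖f‖ := by
    obtain ⟨w, hw⟩ := hCne
    refine norm_pos_iff.mpr fun h => ?_
    linarith [hfC w hw, show f x = f w by simp [h]]
  -- Step `ε / 2` from `x` in a direction nearly norming `f`: then `f - σ ≥ ε ‖f‖ / 4`.
  refine ⟨x + (ε / 2) • g, ?_, ?_⟩
  · have hstep : ‖(ε / 2) • g‖ ≤ ε / 2 := by
      rw [norm_smul, Real.norm_of_nonneg (half_pos hε).le]
      exact mul_le_of_le_one_right (half_pos hε).le hg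
    calc dist (x + (ε / 2) • g) s ≤ dist (x + (ε / 2) • g) x + dist x s :=
          dist_triangle _ _ _
      _ < ε / 2 + ε / 2 := by rw [dist_self_add_left]; exact add_lt_add_of_le_of_lt hstep hxs
      _ = ε := add_halves ε
  · have key := f.sub_le_opNorm_mul_infDist hCne (fun w hw => (hfC w hw).le) (x + (ε / 2) • g)
    rw [map_add, map_smul, smul_eq_mul] at key
    refine lt_of_mul_lt_mul_left ?_ hf.le
    nlinarith

end FarPoint

lemma eventually_residual_frequently_mem {X : Type*} [TopologicalSpace X] {p : ℕ → Set X}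
    (hp : ∀ n, IsOpen (p n)) (hd : ∀ N, Dense (⋃ n ≥ N, p n)) :
    ∀ᶠ x in residual X, ∃ᶠ n in atTop, x ∈ p n := by
  have h : ∀ N, ∀ᶠ x in residual X, ∃ n ≥ N, x ∈ p n := fun N => by
    filter_upwards [residual_of_dense_open (isOpen_biUnion fun n _ => hp n) (hd N)] with x hx
    obtain ⟨n, hn, hxn⟩ := mem_iUnion₂.mp hx
    exact ⟨n, hn, hxn⟩
  filter_upwards [eventually_countable_forall.mpr h] with x hx
  exact frequently_atTop.mpr hx

lemma exists_ge_exists_mem_dist_lt {X : Type*} [PseudoMetricSpace X] {W : ℕ → Set X}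
    (hW : Monotone W) (hd : Dense (⋃ n, W n)) (x : X) (N : ℕ) {η : ℝ} (hη : 0 < η) :
    ∃ n ≥ N, ∃ w ∈ W n, dist x w < η := by
  obtain ⟨w, hw, hxw⟩ := mem_closure_iff.mp (hd.closure_eq ▸ mem_univ x) η hη
  obtain ⟨m, hm⟩ := mem_iUnion.mp hw
  exact ⟨max m N, le_max_right _ _, w, hW (le_max_left _ _) hm, hxw⟩

lemma dense_iUnion_ge_infDist_div_lt {X : Type*} [PseudoMetricSpace X] {W : ℕ → Set X}
    (hW : Monotone W) (hd : Dense (⋃ n, W n)) (u : X) {δ : ℝ} (hδ : 0 < δ) (N : ℕ) :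
    Dense (⋃ n ≥ N, {v | infDist v (W n) / infDist u (W n) < δ}) := by
  refine Metric.dense_iff.mpr fun s ε hε => ?_
  obtain ⟨n, hnN, w, hw, hsw⟩ := exists_ge_exists_mem_dist_lt hW hd s N hε
  refine ⟨w, mem_ball'.mpr hsw, mem_biUnion hnN ?_⟩
  simp [infDist_zero_of_mem hw, hδ]

lemma dense_iUnion_ge_lt_infDist_div {X : Type*} [NormedAddCommGroup X] [NormedSpace ℝ X]
    {W : ℕ → Set X} (hW : Monotone W) (hclosed : ∀ n, IsClosed (W n))
    (hconv : ∀ n, Convex ℝ (W n)) (hint : ∀ n, interior (W n) = ∅) (hd : Dense (⋃ n, W n))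
    {u : X} (hu : u ∉ ⋃ n, W n) (M N : ℕ) :
    Dense (⋃ n ≥ N, {v | M < infDist v (W n) / infDist u (W n)}) := by
  refine Metric.dense_iff.mpr fun s ε hε => ?_
  have hM : (0 : ℝ) < M + 1 := by positivity
  obtain ⟨n, hnN, w, hw, huw⟩ :=
    exists_ge_exists_mem_dist_lt hW hd u N (div_pos hε (mul_pos four_pos hM))
  have hdu_pos : 0 < infDist u (W n) :=
    ((hclosed n).notMem_iff_infDist_pos ⟨w, hw⟩).mp fun h => hu (mem_iUnion.mpr ⟨n, h⟩)
  have hdu_lt := (infDist_le_dist_of_mem hw).trans_lt huw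
  obtain ⟨x, hxs, hx⟩ :=
    exists_dist_lt_and_lt_infDist (hclosed n) (hconv n) ⟨w, hw⟩ (hint n) s hε
  refine ⟨x, hxs, mem_biUnion hnN ((lt_div_iff₀ hdu_pos).mpr ?_)⟩
  calc (M : ℝ) * infDist u (W n) ≤ (M + 1) * infDist u (W n) := by linarith
    _ < (M + 1) * (ε / (4 * (M + 1))) := mul_lt_mul_of_pos_left hdu_lt hM
    _ = ε / 4 := by field_simp
    _ < infDist x (W n) := hx

theorem stmt_9_general {X : Type*}
    [NormedAddCommGroup X] [NormedSpace ℝ X]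
    [CompleteSpace X]
    (W : ℕ → Set X)
    (hmono : ∀ n, W n ⊆ W (n + 1))
    (hclosed : ∀ n, IsClosed (W n))
    (hconv : ∀ n, Convex ℝ (W n))
    (hint : ∀ n, interior (W n) = ∅)
    (hdense : Dense (⋃ n, W n))
    (u : X) (hu : u ∉ ⋃ n, W n) :
    ∃ v : X, v ∉ (⋃ n, W n) ∧
      (∀ M : ℝ, ∃ᶠ n in Filter.atTop,
        M < Metric.infDist v (W n) / Metric.infDist u (W n)) ∧
      (∀ δ : ℝ, 0 < δ → ∃ᶠ n in Filter.atTop,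
        Metric.infDist v (W n) / Metric.infDist u (W n) < δ) := by
  have hW : Monotone W := monotone_nat_of_le_succ hmono
  have hratio_cont : ∀ n, Continuous fun v => infDist v (W n) / infDist u (W n) :=
    fun n => (continuous_infDist_pt _).div_const _
  have h_out : ∀ᶠ v in residual X, v ∉ ⋃ n, W n := by
    simp only [mem_iUnion, not_exists]
    exact eventually_countable_forall.mpr fun n => residual_of_dense_open
      (hclosed n).isOpen_compl (interior_eq_empty_iff_dense_compl.mp (hint n))
  have h_large : ∀ M : ℕ, ∀ᶠ v in residual X,
      ∃ᶠ n in atTop, (M : ℝ) < infDist v (W n) / infDist u (W n) := fun M =>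
    eventually_residual_frequently_mem (fun n => isOpen_lt continuous_const (hratio_cont n))
      (dense_iUnion_ge_lt_infDist_div hW hclosed hconv hint hdense hu M)
  have h_small : ∀ k : ℕ, ∀ᶠ v in residual X,
      ∃ᶠ n in atTop, infDist v (W n) / infDist u (W n) < 1 / (k + 1) := fun k =>
    eventually_residual_frequently_mem (fun n => isOpen_lt (hratio_cont n) continuous_const)
      (dense_iUnion_ge_infDist_div_lt hW hdense u (by positivity))
  have : Nonempty X := ⟨u⟩
  have h_all := h_out.and <|
    (eventually_countable_forall.mpr h_large).and (eventually_countable_forall.mpr h_small)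
  obtain ⟨v, hv_out, hv_large, hv_small⟩ := (dense_of_mem_residual h_all).nonempty
  refine ⟨v, hv_out, fun M => (hv_large ⌈M⌉₊).mono fun n hn => (Nat.le_ceil M).trans_lt hn,
    fun δ hδ => ?_⟩
  obtain ⟨k, hk⟩ := exists_nat_one_div_lt hδ
  exact (hv_small k).mono fun n hn => hn.trans hk

/-- Let `X` be a Banach space (real or complex, scalar field `𝕜`) and `(W_n)` a nested
increasing sequence of closed, convex, bounded, circled subsets of `X`, each with empty
interior, with `Y = ⋃ W_n` dense in `X`.  Then for every `u ∈ X \ Y` there is `v ∈ X \ Y`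
with `limsup dist(v, W_n)/dist(u, W_n) = ∞` and `liminf dist(v, W_n)/dist(u, W_n) = 0`
(expressed via `∃ᶠ`: the ratios are frequently above any `M` and frequently below any
`δ > 0`). -/
theorem stmt_9 {𝕜 X : Type*} [RCLike 𝕜]
    [NormedAddCommGroup X] [NormedSpace ℝ X] [NormedSpace 𝕜 X] [IsScalarTower ℝ 𝕜 X]
    [CompleteSpace X]
    (W : ℕ → Set X)
    (hmono : ∀ n, W n ⊆ W (n + 1))
    (hclosed : ∀ n, IsClosed (W n))
    (hconv : ∀ n, Convex ℝ (W n))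
    (hbdd : ∀ n, Bornology.IsBounded (W n))
    (hcircled : ∀ n, ∀ c : 𝕜, ‖c‖ ≤ 1 → ∀ w ∈ W n, c • w ∈ W n)
    (hint : ∀ n, interior (W n) = ∅)
    (hdense : Dense (⋃ n, W n))
    (u : X) (hu : u ∉ ⋃ n, W n) :
    ∃ v : X, v ∉ (⋃ n, W n) ∧
      (∀ M : ℝ, ∃ᶠ n in Filter.atTop,
        M < Metric.infDist v (W n) / Metric.infDist u (W n)) ∧
      (∀ δ : ℝ, 0 < δ → ∃ᶠ n in Filter.atTop,
        Metric.infDist v (W n) / Metric.infDist u (W n) < δ) :=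
  stmt_9_general W hmono hclosed hconv hint hdense u hu
end

section
/- Let X be a Banach space and 𝔄 a unital subalgebra of L(X). Then the following are equivalent: (1) 𝔄 is strictly semi-transitive; (2) the collection of all 𝔄-invariant linear subspaces of X (not necessarily closed) is totally ordered by inclusion; (3) the collection of all orbits {𝔄x : x ∈ X} is totally ordered by inclusion. -/
/-- The orbit `𝔄x` as a submodule. -/
def orbitSub {𝕜 X : Type*} [RCLike 𝕜] [NormedAddCommGroup X] [NormedSpace 𝕜 X]
    (𝔄 : Subalgebra 𝕜 (X →L[𝕜] X)) (x : X) : Submodule 𝕜 X where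
  carrier := {z : X | ∃ A ∈ 𝔄, A x = z}
  add_mem' := by
    rintro a b ⟨A, hA, rfl⟩ ⟨B, hB, rfl⟩
    exact ⟨A + B, add_mem hA hB, rfl⟩
  zero_mem' := ⟨0, zero_mem 𝔄, rfl⟩
  smul_mem' := by
    rintro c a ⟨A, hA, rfl⟩
    exact ⟨c • A, 𝔄.smul_mem hA c, rfl⟩

/-- Let `X` be a Banach space and `𝔄` a unital subalgebra of `L(X)`.  TFAE:
(1) `𝔄` is strictly semi-transitive (for all nonzero `x, y` there is `A ∈ 𝔄` with
`A x = y` or `A y = x`); (2) the `𝔄`-invariant linear subspaces of `X` are totally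
ordered by inclusion; (3) the orbits `𝔄x` are totally ordered by inclusion. -/
theorem stmt_10 {𝕜 X : Type*} [RCLike 𝕜]
    [NormedAddCommGroup X] [NormedSpace 𝕜 X] [CompleteSpace X]
    (𝔄 : Subalgebra 𝕜 (X →L[𝕜] X)) :
    List.TFAE [
      ∀ x y : X, x ≠ 0 → y ≠ 0 → ∃ A ∈ 𝔄, A x = y ∨ A y = x,
      ∀ Y Z : Submodule 𝕜 X, (∀ A ∈ 𝔄, ∀ v ∈ Y, A v ∈ Y) →
        (∀ A ∈ 𝔄, ∀ v ∈ Z, A v ∈ Z) → Y ≤ Z ∨ Z ≤ Y,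
      ∀ x y : X,
        {z : X | ∃ A ∈ 𝔄, A x = z} ⊆ {z : X | ∃ A ∈ 𝔄, A y = z} ∨
        {z : X | ∃ A ∈ 𝔄, A y = z} ⊆ {z : X | ∃ A ∈ 𝔄, A x = z}] := by
  tfae_have 1 → 3 := by
    intro h x y
    by_cases hx : x = 0
    · left
      rintro z ⟨A, hA, rfl⟩
      subst hx
      exact ⟨0, zero_mem 𝔄, by simp⟩
    by_cases hy : y = 0
    · right
      rintro z ⟨A, hA, rfl⟩
      subst hy
      exact ⟨0, zero_mem 𝔄, by simp⟩
    obtain ⟨A, hA, hAxy | hAyx⟩ := h x y hx hy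
    · right
      rintro z ⟨B, hB, rfl⟩
      exact ⟨B * A, mul_mem hB hA, by simp [ContinuousLinearMap.mul_apply, hAxy]⟩
    · left
      rintro z ⟨B, hB, rfl⟩
      exact ⟨B * A, mul_mem hB hA, by simp [ContinuousLinearMap.mul_apply, hAyx]⟩
  tfae_have 3 → 2 := by
    intro h Y Z hY hZ
    by_contra hc
    push_neg at hc
    obtain ⟨h1, h2⟩ := hc
    rw [SetLike.not_le_iff_exists] at h1 h2
    obtain ⟨y, hyY, hyZ⟩ := h1
    obtain ⟨z, hzZ, hzY⟩ := h2
    rcases h y z with hsub | hsub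
    · obtain ⟨A, hA, hAz⟩ := hsub ⟨1, one_mem 𝔄, ContinuousLinearMap.one_apply y⟩
      exact hyZ (hAz ▸ hZ A hA z hzZ)
    · obtain ⟨A, hA, hAy⟩ := hsub ⟨1, one_mem 𝔄, ContinuousLinearMap.one_apply z⟩
      exact hzY (hAy ▸ hY A hA y hyY)
  tfae_have 2 → 1 := by
    intro h x y hx hy
    have hinv : ∀ v : X, ∀ A ∈ 𝔄, ∀ w ∈ orbitSub 𝔄 v, A w ∈ orbitSub 𝔄 v := by
      rintro v A hA w ⟨B, hB, rfl⟩
      exact ⟨A * B, mul_mem hA hB, rfl⟩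
    have hself : ∀ v : X, v ∈ orbitSub 𝔄 v := fun v =>
      ⟨1, one_mem 𝔄, ContinuousLinearMap.one_apply v⟩
    rcases h (orbitSub 𝔄 x) (orbitSub 𝔄 y) (hinv x) (hinv y) with hle | hle
    · obtain ⟨A, hA, hAx⟩ := hle (hself x)
      exact ⟨A, hA, Or.inr hAx⟩
    · obtain ⟨A, hA, hAy⟩ := hle (hself y)
      exact ⟨A, hA, Or.inl hAy⟩
  tfae_finish
end

section
/- Let X be a Banach space and 𝔄 a norm-closed, strictly semi-transitive subalgebra of L(X). Then the orbit 𝔄x = {Ax : A ∈ 𝔄} is a closed subspace of X for every x ∈ X. -/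
/-!
Let `Z` be the closure of the orbit `𝔄x`, a closed subspace invariant under `𝔄`, and write
`𝔄ₙz = {A z : A ∈ 𝔄, ‖A‖ ≤ n}`. For `ζ ≠ 0`, strict semi-transitivity covers `Z` by the countably
many closed sets `closure (𝔄ₙζ)` and `{z | ζ ∈ closure (𝔄ₙz)}`. By the Baire category theorem,
either some `closure (𝔄ₙζ)` contains a relative ball of `Z`, or `ζ` lies in some `closure (𝔄ₙx)`;
if the first never happens, Baire applied to the cover of `Z` by the sets `closure (𝔄ₙx)` makes it
happen for `ζ = x`. So there is `z₀ ∈ Z` such that a ball of `Z` lies in `closure (𝔄ₖz₀)`.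

As in the open mapping theorem, every `y ∈ Z` is then approximated by `A z₀` with `‖A‖ ≤ C‖y‖`.
This survives replacing `z₀` by a nearby point `B x` of the orbit, and the approximations sum up
in the Banach space `𝔄` to an exact solution of `A (B x) = y`; hence `y = (A * B) x ∈ 𝔄x`.
-/

open Metric Set Filter Topology

theorem ContinuousLinearMap.surjective_of_approx_preimage_s11 {R E F : Type*} [Semiring R]
    [NormedAddCommGroup E] [Module R E] [CompleteSpace E] [NormedAddCommGroup F] [Module R F]
    (f : E →L[R] F) {C : ℝ} (h : ∀ y, ∃ x, ‖f x - y‖ ≤ 2⁻¹ * ‖y‖ ∧ ‖x‖ ≤ C * ‖y‖) :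
    Function.Surjective f := by
  choose g hg using h
  intro y
  let res : F → F := fun z => z - f (g z)
  have hres : ∀ n, ‖res^[n] y‖ ≤ 2⁻¹ ^ n * ‖y‖ := by
    intro n
    induction n with
    | zero => simp
    | succ n ih =>
      rw [Function.iterate_succ_apply', pow_succ', mul_assoc]
      calc ‖res (res^[n] y)‖ ≤ 2⁻¹ * ‖res^[n] y‖ := by rw [norm_sub_rev]; exact (hg _).1
        _ ≤ _ := by gcongr
  let u : ℕ → E := fun n => g (res^[n] y)
  have hu : Summable u := by
    refine .of_norm_bounded ((summable_geometric_of_lt_one (by norm_num) (by norm_num :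
      (2⁻¹ : ℝ) < 1)).mul_left (max C 0 * ‖y‖)) fun n => ?_
    calc ‖u n‖ ≤ C * ‖res^[n] y‖ := (hg _).2
      _ ≤ max C 0 * (2⁻¹ ^ n * ‖y‖) := by gcongr; exacts [le_max_left _ _, hres n]
      _ = _ := by ring
  have hsum : ∀ n, f (∑ i ∈ Finset.range n, u i) = y - res^[n] y := by
    intro n
    induction n with
    | zero => simp
    | succ n ih =>
      rw [Finset.sum_range_succ, map_add, ih, Function.iterate_succ_apply']
      simp only [res]
      abel
  have hres0 : Tendsto (fun n => res^[n] y) atTop (𝓝 0) :=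
    squeeze_zero_norm hres (by simpa using (tendsto_pow_atTop_nhds_zero_of_lt_one
      (by norm_num) (by norm_num : (2⁻¹ : ℝ) < 1)).mul_const ‖y‖)
  refine ⟨∑' n, u n,
    tendsto_nhds_unique ((f.continuous.tendsto _).comp hu.hasSum.tendsto_sum_nat) ?_⟩
  simpa [Function.comp_def, hsum] using tendsto_const_nhds.sub hres0

theorem IsClosed.exists_inter_ball_subset_of_subset_iUnion {X ι : Type*} [MetricSpace X]
    [CompleteSpace X] [Countable ι] {Z : Set X} (hZ : IsClosed Z) (hne : Z.Nonempty)
    {F : ι → Set X} (hF : ∀ i, IsClosed (F i)) (hcov : Z ⊆ ⋃ i, F i) :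
    ∃ i, ∃ c ∈ Z, ∃ r > 0, Z ∩ ball c r ⊆ F i := by
  have : Nonempty Z := hne.to_subtype
  have : CompleteSpace Z := hZ.completeSpace_coe
  obtain ⟨i, ⟨c, hc⟩, hci⟩ := nonempty_interior_of_iUnion_of_closed
    (fun i => (hF i).preimage continuous_subtype_val)
    (eq_univ_of_forall fun z => by simpa using hcov z.2)
  obtain ⟨r, hr, hball⟩ := Metric.isOpen_iff.mp isOpen_interior _ hci
  exact ⟨i, c, hc, r, hr, fun v ⟨hvZ, hv⟩ =>
    interior_subset (s := Subtype.val ⁻¹' F i) (hball (a := ⟨v, hvZ⟩) hv)⟩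

namespace NonUnitalSubalgebra

variable {𝕜 X : Type*} [RCLike 𝕜] [NormedAddCommGroup X] [NormedSpace 𝕜 X]
  (𝔄 : NonUnitalSubalgebra 𝕜 (X →L[𝕜] X))

def orbit (x : X) : Submodule 𝕜 X where
  carrier := {y | ∃ A ∈ 𝔄, A x = y}
  add_mem' := by
    rintro _ _ ⟨A, hA, rfl⟩ ⟨B, hB, rfl⟩
    exact ⟨A + B, add_mem hA hB, rfl⟩
  zero_mem' := ⟨0, zero_mem _, rfl⟩
  smul_mem' := by
    rintro c _ ⟨A, hA, rfl⟩
    exact ⟨c • A, SMulMemClass.smul_mem c hA, rfl⟩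

def boundedOrbit (k : ℝ) (x : X) : Set X := {y | ∃ A ∈ 𝔄, ‖A‖ ≤ k ∧ A x = y}

def IsStrictlySemiTransitive : Prop :=
  ∀ x y : X, x ≠ 0 → y ≠ 0 → ∃ A ∈ 𝔄, A x = y ∨ A y = x

variable {𝔄}

theorem apply_mem_orbit {A : X →L[𝕜] X} (hA : A ∈ 𝔄) (x : X) : A x ∈ 𝔄.orbit x := ⟨A, hA, rfl⟩

theorem mapsTo_closure_orbit {A : X →L[𝕜] X} (hA : A ∈ 𝔄) (x : X) :
    MapsTo A (𝔄.orbit x).topologicalClosure (𝔄.orbit x).topologicalClosure := by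
  have : MapsTo A (𝔄.orbit x) (𝔄.orbit x) := by
    rintro _ ⟨B, hB, rfl⟩
    exact ⟨A * B, mul_mem hA hB, rfl⟩
  simpa only [Submodule.topologicalClosure_coe] using this.closure A.continuous

theorem zero_mem_boundedOrbit {k : ℝ} (hk : 0 ≤ k) (x : X) : 0 ∈ 𝔄.boundedOrbit k x :=
  ⟨0, zero_mem _, by simpa using hk, rfl⟩

theorem boundedOrbit_mono {k l : ℝ} (h : k ≤ l) (x : X) :
    𝔄.boundedOrbit k x ⊆ 𝔄.boundedOrbit l x := by
  rintro _ ⟨A, hA, hAk, rfl⟩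
  exact ⟨A, hA, hAk.trans h, rfl⟩

theorem boundedOrbit_apply_subset {B : X →L[𝕜] X} (hB : B ∈ 𝔄) (m : ℝ) (x : X) :
    𝔄.boundedOrbit m (B x) ⊆ 𝔄.boundedOrbit (m * ‖B‖) x := by
  rintro _ ⟨A, hA, hAm, rfl⟩
  exact ⟨A * B, mul_mem hA hB, (norm_mul_le A B).trans (by gcongr), rfl⟩

theorem sub_mem_closure_boundedOrbit {k l : ℝ} {x u v : X}
    (hu : u ∈ closure (𝔄.boundedOrbit k x)) (hv : v ∈ closure (𝔄.boundedOrbit l x)) :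
    u - v ∈ closure (𝔄.boundedOrbit (k + l) x) := by
  refine map_mem_closure₂ continuous_sub hu hv ?_
  rintro _ ⟨A, hA, hAk, rfl⟩ _ ⟨B, hB, hBl, rfl⟩
  exact ⟨A - B, sub_mem hA hB, (norm_sub_le A B).trans (add_le_add hAk hBl), rfl⟩

theorem smul_mem_closure_boundedOrbit (t : 𝕜) {k : ℝ} {x u : X}
    (hu : u ∈ closure (𝔄.boundedOrbit k x)) :
    t • u ∈ closure (𝔄.boundedOrbit (‖t‖ * k) x) := by
  refine map_mem_closure (continuous_const_smul t) hu ?_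
  rintro _ ⟨A, hA, hAk, rfl⟩
  exact ⟨t • A, SMulMemClass.smul_mem t hA, by rw [norm_smul]; gcongr, rfl⟩

theorem isClosed_setOf_mem_closure_boundedOrbit (ζ : X) {m : ℝ} (hm : 0 ≤ m) :
    IsClosed {z : X | ζ ∈ closure (𝔄.boundedOrbit m z)} := by
  refine isClosed_of_closure_subset fun z hz => Metric.mem_closure_iff.mpr fun ε hε => ?_
  obtain ⟨z', hz', hzz'⟩ := Metric.mem_closure_iff.mp hz (ε / (2 * (m + 1))) (by positivity)
  obtain ⟨_, ⟨A, hA, hAm, rfl⟩, hζA⟩ := Metric.mem_closure_iff.mp hz' (ε / 2) (by positivity)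
  refine ⟨A z, ⟨A, hA, hAm, rfl⟩, ?_⟩
  have hAzz' : dist (A z') (A z) ≤ m * dist z z' := by
    rw [dist_comm z, dist_eq_norm, dist_eq_norm, ← map_sub]
    exact (A.le_opNorm _).trans (by gcongr)
  have : m * dist z z' ≤ ε / 2 := by
    calc m * dist z z' ≤ (m + 1) * (ε / (2 * (m + 1))) := by gcongr; linarith
      _ = ε / 2 := by field_simp
  linarith [dist_triangle ζ (A z') (A z)]

theorem forall_mem_closure_boundedOrbit_of_inter_ball {Z : Submodule 𝕜 X} {z₀ c : X} {k r : ℝ}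
    (hc : c ∈ Z) (hr : 0 < r) (hball : (Z : Set X) ∩ ball c r ⊆ closure (𝔄.boundedOrbit k z₀)) :
    ∀ y ∈ Z, y ∈ closure (𝔄.boundedOrbit (2 * k / r * ‖y‖) z₀) := by
  intro y hy
  rcases eq_or_ne y 0 with rfl | hy0
  · simpa using subset_closure (zero_mem_boundedOrbit le_rfl z₀)
  -- `y` is a multiple of `(c + h) - (c - h)` for a vector `h = a • y ∈ Z` of norm `r / 2`
  set a : 𝕜 := ((r / (2 * ‖y‖) : ℝ) : 𝕜)
  have hya : ‖a • y‖ = r / 2 := by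
    rw [norm_smul, RCLike.norm_ofReal, abs_of_pos (by positivity)]
    field_simp
  have hplus : c + a • y ∈ closure (𝔄.boundedOrbit k z₀) :=
    hball ⟨Z.add_mem hc (Z.smul_mem a hy), by simp [hya, hr]⟩
  have hminus : c - a • y ∈ closure (𝔄.boundedOrbit k z₀) :=
    hball ⟨Z.sub_mem hc (Z.smul_mem a hy), by simp [hya, hr]⟩
  have ha : a ≠ 0 := by simp [a, hr.ne', hy0]
  have hy_eq : (2 * a)⁻¹ • ((c + a • y) - (c - a • y)) = y := by
    rw [add_sub_sub_cancel, ← two_smul 𝕜, smul_smul, smul_smul, mul_assoc,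
      inv_mul_cancel₀ (mul_ne_zero two_ne_zero ha), one_smul]
  have hbound : ‖(2 * a)⁻¹‖ * (k + k) = 2 * k / r * ‖y‖ := by
    rw [norm_inv, norm_mul, RCLike.norm_two, RCLike.norm_ofReal, abs_of_pos (by positivity)]
    field_simp
    ring
  simpa only [hy_eq, hbound] using
    smul_mem_closure_boundedOrbit (2 * a)⁻¹ (sub_mem_closure_boundedOrbit hplus hminus)

theorem exists_apply_eq_of_approx [CompleteSpace X] (hclosed : IsClosed (𝔄 : Set (X →L[𝕜] X)))
    {Z : Submodule 𝕜 X} (hZ : ∀ A ∈ 𝔄, MapsTo A Z Z) {w : X} (hw : w ∈ Z) {C : ℝ}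
    (happrox : ∀ y ∈ Z, ∃ A ∈ 𝔄, ‖A w - y‖ ≤ 2⁻¹ * ‖y‖ ∧ ‖A‖ ≤ C * ‖y‖) :
    ∀ y ∈ Z, ∃ A ∈ 𝔄, A w = y := by
  have : CompleteSpace 𝔄.toSubmodule := hclosed.completeSpace_coe
  let f : 𝔄.toSubmodule →L[𝕜] Z :=
    ((ContinuousLinearMap.apply 𝕜 X w).comp 𝔄.toSubmodule.subtypeL).codRestrict Z
      fun A => hZ A A.2 hw
  have hf : Function.Surjective f := f.surjective_of_approx_preimage_s11 fun y => by
    obtain ⟨A, hA, happ⟩ := happrox y y.2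
    exact ⟨⟨A, hA⟩, happ⟩
  intro y hy
  obtain ⟨A, hA⟩ := hf ⟨y, hy⟩
  exact ⟨A, A.2, congrArg Subtype.val hA⟩

theorem closure_orbit_subset_orbit_of_mem_closure_boundedOrbit [CompleteSpace X]
    (hclosed : IsClosed (𝔄 : Set (X →L[𝕜] X)))
    {x z₀ : X} (hz₀ : z₀ ∈ (𝔄.orbit x).topologicalClosure) {C : ℝ}
    (hC : ∀ y ∈ (𝔄.orbit x).topologicalClosure, y ∈ closure (𝔄.boundedOrbit (C * ‖y‖) z₀)) :
    ((𝔄.orbit x).topologicalClosure : Set X) ⊆ 𝔄.orbit x := by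
  obtain ⟨δ, hδ, hCδ⟩ := exists_pos_mul_lt (by norm_num : (0 : ℝ) < 4⁻¹) C
  rw [← SetLike.mem_coe, Submodule.topologicalClosure_coe] at hz₀
  obtain ⟨_, ⟨B, hB, rfl⟩, hBx⟩ := Metric.mem_closure_iff.mp hz₀ δ hδ
  -- solutions at `z₀` with controlled norm are approximate solutions at the nearby `B x`
  have happrox : ∀ y ∈ (𝔄.orbit x).topologicalClosure,
      ∃ A ∈ 𝔄, ‖A (B x) - y‖ ≤ 2⁻¹ * ‖y‖ ∧ ‖A‖ ≤ C * ‖y‖ := by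
    intro y hy
    obtain ⟨A, hA, hAC, hAy⟩ : ∃ A ∈ 𝔄, ‖A‖ ≤ C * ‖y‖ ∧ ‖A z₀ - y‖ ≤ 4⁻¹ * ‖y‖ := by
      rcases eq_or_ne y 0 with rfl | hy0
      · exact ⟨0, zero_mem _, by simp, by simp⟩
      obtain ⟨_, ⟨A, hA, hAC, rfl⟩, hAy⟩ :=
        Metric.mem_closure_iff.mp (hC y hy) (4⁻¹ * ‖y‖) (by positivity)
      exact ⟨A, hA, hAC, by rw [← dist_eq_norm, dist_comm]; exact hAy.le⟩
    refine ⟨A, hA, ?_, hAC⟩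
    have hCy : 0 ≤ C * ‖y‖ := (norm_nonneg A).trans hAC
    calc ‖A (B x) - y‖ = ‖A (B x - z₀) + (A z₀ - y)‖ := by rw [map_sub]; abel_nf
      _ ≤ ‖A‖ * ‖B x - z₀‖ + 4⁻¹ * ‖y‖ := norm_add_le_of_le (A.le_opNorm _) hAy
      _ ≤ C * ‖y‖ * δ + 4⁻¹ * ‖y‖ := by
        rw [← dist_eq_norm, dist_comm]
        gcongr
      _ ≤ 2⁻¹ * ‖y‖ := by nlinarith [norm_nonneg y]
  intro y hy
  obtain ⟨A, hA, rfl⟩ := exists_apply_eq_of_approx hclosed (fun A hA => mapsTo_closure_orbit hA x)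
    ((𝔄.orbit x).le_topologicalClosure (apply_mem_orbit hB x)) happrox y hy
  exact ⟨A * B, mul_mem hA hB, rfl⟩

namespace IsStrictlySemiTransitive

variable (h𝔄 : 𝔄.IsStrictlySemiTransitive)
include h𝔄

theorem mem_orbit_self (x : X) : x ∈ 𝔄.orbit x := by
  rcases eq_or_ne x 0 with rfl | hx
  · exact zero_mem _
  obtain ⟨A, hA, hAx | hAx⟩ := h𝔄 x x hx hx <;> exact ⟨A, hA, hAx⟩

theorem exists_mem_boundedOrbit_or {ζ : X} (hζ : ζ ≠ 0) (z : X) :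
    ∃ n : ℕ, z ∈ 𝔄.boundedOrbit n ζ ∨ ζ ∈ 𝔄.boundedOrbit n z := by
  rcases eq_or_ne z 0 with rfl | hz
  · exact ⟨0, .inl (zero_mem_boundedOrbit (Nat.cast_nonneg 0) ζ)⟩
  obtain ⟨A, hA, hAz | hAz⟩ := h𝔄 ζ z hζ hz
  · exact ⟨⌈‖A‖⌉₊, .inl ⟨A, hA, Nat.le_ceil _, hAz⟩⟩
  · exact ⟨⌈‖A‖⌉₊, .inr ⟨A, hA, Nat.le_ceil _, hAz⟩⟩

theorem exists_inter_ball_subset_or [CompleteSpace X] {x ζ : X}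
    (hζ : ζ ∈ (𝔄.orbit x).topologicalClosure) :
    (∃ k : ℝ, ∃ c ∈ (𝔄.orbit x).topologicalClosure, ∃ r > 0,
      ((𝔄.orbit x).topologicalClosure : Set X) ∩ ball c r ⊆ closure (𝔄.boundedOrbit k ζ)) ∨
    ∃ n : ℕ, ζ ∈ closure (𝔄.boundedOrbit n x) := by
  rcases eq_or_ne ζ 0 with rfl | hζ0
  · exact .inr ⟨0, subset_closure (zero_mem_boundedOrbit (Nat.cast_nonneg 0) x)⟩
  let F : ℕ ⊕ ℕ → Set X :=
    Sum.elim (fun n => closure (𝔄.boundedOrbit n ζ)) fun n => {z | ζ ∈ closure (𝔄.boundedOrbit n z)}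
  have hF : ∀ i, IsClosed (F i) := by
    rintro (n | n)
    exacts [isClosed_closure, isClosed_setOf_mem_closure_boundedOrbit ζ n.cast_nonneg]
  have hcov : ((𝔄.orbit x).topologicalClosure : Set X) ⊆ ⋃ i, F i := fun z _ => by
    obtain ⟨n, hn | hn⟩ := h𝔄.exists_mem_boundedOrbit_or hζ0 z
    exacts [mem_iUnion.mpr ⟨.inl n, subset_closure hn⟩, mem_iUnion.mpr ⟨.inr n, subset_closure hn⟩]
  obtain ⟨n | n, c, hc, r, hr, hball⟩ := (𝔄.orbit x).isClosed_topologicalClosure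
    |>.exists_inter_ball_subset_of_subset_iUnion ⟨0, zero_mem _⟩ hF hcov
  · exact .inl ⟨n, c, hc, r, hr, hball⟩
  -- `ζ` is reached from the points of the orbit of `x` near `c`
  rw [Submodule.topologicalClosure_coe] at hc
  obtain ⟨_, ⟨B, hB, rfl⟩, hBc⟩ := Metric.mem_closure_iff.mp hc r hr
  have hζB : ζ ∈ closure (𝔄.boundedOrbit n (B x)) :=
    hball ⟨(𝔄.orbit x).le_topologicalClosure (apply_mem_orbit hB x), by rwa [mem_ball_comm]⟩
  refine .inr ⟨⌈n * ‖B‖⌉₊, closure_mono ?_ hζB⟩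
  exact (boundedOrbit_apply_subset hB n x).trans (boundedOrbit_mono (Nat.le_ceil _) x)

theorem exists_inter_ball_subset [CompleteSpace X] (x : X) :
    ∃ z₀ ∈ (𝔄.orbit x).topologicalClosure, ∃ k : ℝ, ∃ c ∈ (𝔄.orbit x).topologicalClosure,
      ∃ r > 0, ((𝔄.orbit x).topologicalClosure : Set X) ∩ ball c r ⊆
        closure (𝔄.boundedOrbit k z₀) := by
  by_contra! hno
  have hcov : ((𝔄.orbit x).topologicalClosure : Set X) ⊆
      ⋃ n : ℕ, closure (𝔄.boundedOrbit n x) := fun ζ hζ => by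
    obtain ⟨k, c, hc, r, hr, hball⟩ | ⟨n, hn⟩ := h𝔄.exists_inter_ball_subset_or hζ
    exacts [(hno ζ hζ k c hc r hr hball).elim, mem_iUnion.mpr ⟨n, hn⟩]
  obtain ⟨n, c, hc, r, hr, hball⟩ := (𝔄.orbit x).isClosed_topologicalClosure
    |>.exists_inter_ball_subset_of_subset_iUnion ⟨0, zero_mem _⟩ (fun _ => isClosed_closure) hcov
  exact hno x ((𝔄.orbit x).le_topologicalClosure (h𝔄.mem_orbit_self x)) n c hc r hr hball

end IsStrictlySemiTransitive

end NonUnitalSubalgebra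

/-- Let `X` be a Banach space and `𝔄` a norm-closed, strictly semi-transitive subalgebra
of `L(X)`.  Then the orbit `𝔄x = {A x : A ∈ 𝔄}` is closed for every `x ∈ X`. -/
theorem stmt_11 {𝕜 X : Type*} [RCLike 𝕜]
    [NormedAddCommGroup X] [NormedSpace 𝕜 X] [CompleteSpace X]
    (𝔄 : NonUnitalSubalgebra 𝕜 (X →L[𝕜] X))
    (hclosed : IsClosed (𝔄 : Set (X →L[𝕜] X)))
    (hsst : ∀ x y : X, x ≠ 0 → y ≠ 0 → ∃ A ∈ 𝔄, A x = y ∨ A y = x)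
    (x : X) :
    IsClosed {y : X | ∃ A ∈ 𝔄, A x = y} := by
  have h𝔄 : 𝔄.IsStrictlySemiTransitive := hsst
  obtain ⟨z₀, hz₀, k, c, hc, r, hr, hball⟩ := h𝔄.exists_inter_ball_subset x
  show IsClosed (𝔄.orbit x : Set X)
  refine isClosed_of_closure_subset ?_
  rw [← Submodule.topologicalClosure_coe]
  exact NonUnitalSubalgebra.closure_orbit_subset_orbit_of_mem_closure_boundedOrbit hclosed hz₀
    (NonUnitalSubalgebra.forall_mem_closure_boundedOrbit_of_inter_ball hc hr hball)
end

section
/- Let X be a Banach space and 𝔄 a strictly semi-transitive subalgebra of L(X). Then Lat 𝔄, the lattice of closed 𝔄-invariant subspaces of X, is well-ordered by reverse inclusion; that is, every nonempty subset of Lat 𝔄 has a maximal element with respect to inclusion. -/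
private lemma tail_bound16 {X : Type*} [NormedAddCommGroup X]
    (a : ℕ → X) (b : ℝ) (hb : 0 ≤ b)
    (h : ∀ i, ‖a i‖ ≤ 2 * b * (16⁻¹ : ℝ) ^ i) :
    ‖∑' i, a i‖ ≤ 4 * b := by
  have hgeom : HasSum (fun i : ℕ => 2 * b * (16⁻¹ : ℝ) ^ i) (2 * b * (1 - 16⁻¹)⁻¹) :=
    (hasSum_geometric_of_lt_one (by norm_num) (by norm_num)).mul_left _
  have h1 := tsum_of_norm_bounded hgeom h
  have h2 : 2 * b * ((1 : ℝ) - 16⁻¹)⁻¹ ≤ 4 * b := by nlinarith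
  linarith

set_option maxHeartbeats 1600000 in
/-- Let `X` be a Banach space and `𝔄` a strictly semi-transitive subalgebra of `L(X)`.
Then `Lat 𝔄` is well-ordered by reverse inclusion: every nonempty collection of closed
`𝔄`-invariant subspaces of `X` has a maximal element with respect to inclusion. -/
theorem stmt_13 {𝕜 X : Type*} [RCLike 𝕜]
    [NormedAddCommGroup X] [NormedSpace 𝕜 X] [CompleteSpace X]
    (𝔄 : NonUnitalSubalgebra 𝕜 (X →L[𝕜] X))
    (hsst : ∀ x y : X, x ≠ 0 → y ≠ 0 → ∃ A ∈ 𝔄, A x = y ∨ A y = x)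
    (𝒲 : Set (Submodule 𝕜 X))
    (h𝒲 : ∀ Y ∈ 𝒲, IsClosed (Y : Set X) ∧ ∀ A ∈ 𝔄, ∀ v ∈ Y, A v ∈ Y)
    (hne : 𝒲.Nonempty) :
    ∃ Y ∈ 𝒲, ∀ Z ∈ 𝒲, Y ≤ Z → Z = Y := by
  by_contra hcon
  push_neg at hcon
  obtain ⟨Y₀, hY₀⟩ := hne
  have hstep : ∀ s : {Y : Submodule 𝕜 X // Y ∈ 𝒲},
      ∃ t : {Y : Submodule 𝕜 X // Y ∈ 𝒲}, s.1 < t.1 := by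
    rintro ⟨s, hs⟩
    obtain ⟨Z, hZ, hle, hne'⟩ := hcon s hs
    exact ⟨⟨Z, hZ⟩, lt_of_le_of_ne hle (Ne.symm hne')⟩
  choose g hg using hstep
  set f : ℕ → {Y : Submodule 𝕜 X // Y ∈ 𝒲} := fun n => g^[n] ⟨Y₀, hY₀⟩ with hfdef
  have hfs : ∀ n, f (n + 1) = g (f n) := fun n => Function.iterate_succ_apply' g n _
  set Y : ℕ → Submodule 𝕜 X := fun n => (f n).1 with hYdef
  have hYlt : ∀ n, Y n < Y (n + 1) := by
    intro n
    have h1 : Y (n + 1) = (g (f n)).1 := by rw [hYdef]; simp only [hfs n]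
    rw [h1]
    exact hg (f n)
  have hYc : ∀ n, IsClosed ((Y n : Set X)) := fun n => (h𝒲 _ (f n).2).1
  have hYinv : ∀ n, ∀ A ∈ 𝔄, ∀ x ∈ Y n, A x ∈ Y n := fun n => (h𝒲 _ (f n).2).2
  have hYmono : Monotone Y := monotone_nat_of_le_succ fun n => (hYlt n).le
  -- Riesz-type vectors
  have he : ∀ n, ∃ e : X, e ∈ Y (n + 1) ∧ ‖e‖ ≤ 2 ∧ ∀ w ∈ Y n, 1 ≤ ‖e - w‖ := by
    intro n
    obtain ⟨z, hz1, hz0⟩ := SetLike.exists_of_lt (hYlt n)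
    have hne0 : ((Y n : Set X)).Nonempty := ⟨0, Submodule.zero_mem _⟩
    have hd : 0 < Metric.infDist z (Y n : Set X) :=
      ((hYc n).notMem_iff_infDist_pos hne0).1 hz0
    set d := Metric.infDist z (Y n : Set X) with hdd
    obtain ⟨w, hw, hwd⟩ := (Metric.infDist_lt_iff hne0).1 (show d < 2 * d by linarith)
    have hdK : ((d : 𝕜)) ≠ 0 := by
      simp only [ne_eq, RCLike.ofReal_eq_zero]; linarith
    refine ⟨((d : ℝ) : 𝕜)⁻¹ • (z - w), ?_, ?_, ?_⟩
    · exact Submodule.smul_mem _ _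
        (Submodule.sub_mem _ hz1 (hYmono (Nat.le_succ n) hw))
    · rw [norm_smul, norm_inv, RCLike.norm_ofReal, abs_of_pos hd, ← dist_eq_norm]
      have hdi : d * d⁻¹ = 1 := mul_inv_cancel₀ (ne_of_gt hd)
      nlinarith [dist_nonneg (x := z) (y := w)]
    · intro w' hw'
      have hmem : w + ((d : ℝ) : 𝕜) • w' ∈ (Y n : Set X) :=
        Submodule.add_mem _ hw (Submodule.smul_mem _ _ hw')
      have hdist : d ≤ ‖z - (w + ((d : ℝ) : 𝕜) • w')‖ := by
        have h5 := Metric.infDist_le_dist_of_mem (x := z) hmem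
        rw [dist_eq_norm] at h5
        exact h5
      have heq : ((d : ℝ) : 𝕜)⁻¹ • (z - w) - w'
          = ((d : ℝ) : 𝕜)⁻¹ • (z - (w + ((d : ℝ) : 𝕜) • w')) := by
        rw [smul_sub, smul_sub, smul_add, inv_smul_smul₀ hdK]
        abel
      rw [heq, norm_smul, norm_inv, RCLike.norm_ofReal, abs_of_pos hd]
      have hdi : d * d⁻¹ = 1 := mul_inv_cancel₀ (ne_of_gt hd)
      nlinarith [norm_nonneg (z - (w + ((d : ℝ) : 𝕜) • w'))]
  choose e hemem henorm hedist using he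
  -- coefficients
  set c : ℕ → ℝ := fun n => (16⁻¹ : ℝ) ^ (n * n) with hcdef
  have hcpos : ∀ n, 0 < c n := fun n => pow_pos (by norm_num) _
  have hcsucc : ∀ n, c (n + 1) = c n * (16⁻¹ : ℝ) ^ (2 * n + 1) := by
    intro n
    rw [hcdef]
    rw [← pow_add]
    congr 1
    ring
  have hcstep : ∀ n, c (n + 1) ≤ 16⁻¹ * c n := by
    intro n
    rw [hcsucc n]
    have : ((16:ℝ)⁻¹) ^ (2 * n + 1) ≤ 16⁻¹ ^ 1 :=
      pow_le_pow_of_le_one (by norm_num) (by norm_num) (by omega)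
    nlinarith [hcpos n]
  have hciter : ∀ m i, c (m + i) ≤ (16⁻¹ : ℝ) ^ i * c m := by
    intro m i
    induction i with
    | zero => simp
    | succ i ih =>
      have := hcstep (m + i)
      calc c (m + (i + 1)) = c ((m + i) + 1) := by ring_nf
        _ ≤ 16⁻¹ * c (m + i) := hcstep (m + i)
        _ ≤ 16⁻¹ * ((16⁻¹ : ℝ) ^ i * c m) := by
            have h16 : (0:ℝ) < 16⁻¹ := by norm_num
            nlinarith [ih]
        _ = (16⁻¹ : ℝ) ^ (i + 1) * c m := by ring
  have hcle : ∀ n, c n ≤ (16⁻¹ : ℝ) ^ n := by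
    intro n
    have hn : n ≤ n * n := by nlinarith
    exact pow_le_pow_of_le_one (by norm_num) (by norm_num) hn
  -- the two series
  set F : ℕ → X := fun j => ((c (2 * j) : ℝ) : 𝕜) • e (2 * j) with hFdef
  set G : ℕ → X := fun j => ((c (2 * j + 1) : ℝ) : 𝕜) • e (2 * j + 1) with hGdef
  have hFnorm : ∀ j, ‖F j‖ ≤ 2 * c (2 * j) := by
    intro j
    rw [hFdef]
    simp only []
    rw [norm_smul, RCLike.norm_ofReal, abs_of_pos (hcpos _)]
    have := henorm (2 * j)
    nlinarith [hcpos (2 * j)]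
  have hGnorm : ∀ j, ‖G j‖ ≤ 2 * c (2 * j + 1) := by
    intro j
    rw [hGdef]
    simp only []
    rw [norm_smul, RCLike.norm_ofReal, abs_of_pos (hcpos _)]
    have := henorm (2 * j + 1)
    nlinarith [hcpos (2 * j + 1)]
  have hFsum : Summable F := by
    apply Summable.of_norm_bounded (g := fun j => 2 * (16⁻¹ : ℝ) ^ j)
    · exact (summable_geometric_of_lt_one (by norm_num) (by norm_num)).mul_left 2
    · intro j
      have h1 : c (2 * j) ≤ (16⁻¹ : ℝ) ^ j := by
        calc c (2 * j) ≤ (16⁻¹ : ℝ) ^ (2 * j) := hcle _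
          _ ≤ (16⁻¹ : ℝ) ^ j := pow_le_pow_of_le_one (by norm_num) (by norm_num) (by omega)
      have := hFnorm j
      linarith
  have hGsum : Summable G := by
    apply Summable.of_norm_bounded (g := fun j => 2 * (16⁻¹ : ℝ) ^ j)
    · exact (summable_geometric_of_lt_one (by norm_num) (by norm_num)).mul_left 2
    · intro j
      have h1 : c (2 * j + 1) ≤ (16⁻¹ : ℝ) ^ j := by
        calc c (2 * j + 1) ≤ (16⁻¹ : ℝ) ^ (2 * j + 1) := hcle _
          _ ≤ (16⁻¹ : ℝ) ^ j := pow_le_pow_of_le_one (by norm_num) (by norm_num) (by omega)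
      have := hGnorm j
      linarith
  set u : X := ∑' j, F j with hudef
  set v : X := ∑' j, G j with hvdef
  -- tail estimates
  have hFtail : ∀ k, ‖∑' i, F (i + k)‖ ≤ 4 * c (2 * k) := by
    intro k
    apply tail_bound16 _ _ (le_of_lt (hcpos _))
    intro i
    have h1 : c (2 * (i + k)) ≤ (16⁻¹ : ℝ) ^ i * c (2 * k) := by
      have h2 : c (2 * k + 2 * i) ≤ (16⁻¹ : ℝ) ^ (2 * i) * c (2 * k) := hciter (2 * k) (2 * i)
      have h3 : ((16:ℝ)⁻¹) ^ (2 * i) ≤ (16⁻¹ : ℝ) ^ i :=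
        pow_le_pow_of_le_one (by norm_num) (by norm_num) (by omega)
      have h4 : 2 * (i + k) = 2 * k + 2 * i := by ring
      rw [h4]
      nlinarith [hcpos (2 * k)]
    have := hFnorm (i + k)
    nlinarith [pow_pos (show (0:ℝ) < 16⁻¹ by norm_num) i, hcpos (2 * k)]
  have hGtail : ∀ k, ‖∑' i, G (i + k)‖ ≤ 4 * c (2 * k + 1) := by
    intro k
    apply tail_bound16 _ _ (le_of_lt (hcpos _))
    intro i
    have h1 : c (2 * (i + k) + 1) ≤ (16⁻¹ : ℝ) ^ i * c (2 * k + 1) := by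
      have h2 : c ((2 * k + 1) + 2 * i) ≤ (16⁻¹ : ℝ) ^ (2 * i) * c (2 * k + 1) :=
        hciter (2 * k + 1) (2 * i)
      have h3 : ((16:ℝ)⁻¹) ^ (2 * i) ≤ (16⁻¹ : ℝ) ^ i :=
        pow_le_pow_of_le_one (by norm_num) (by norm_num) (by omega)
      have h4 : 2 * (i + k) + 1 = (2 * k + 1) + 2 * i := by ring
      rw [h4]
      nlinarith [hcpos (2 * k + 1)]
    have := hGnorm (i + k)
    nlinarith [pow_pos (show (0:ℝ) < 16⁻¹ by norm_num) i, hcpos (2 * k + 1)]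
  -- lower-bound key step
  have hkey : ∀ (m : ℕ) (w' : X), w' ∈ Y m → c m ≤ ‖((c m : ℝ) : 𝕜) • e m - w'‖ := by
    intro m w' hw'
    have hc0 : ((c m : ℝ) : 𝕜) ≠ 0 := by
      simp only [ne_eq, RCLike.ofReal_eq_zero]
      exact ne_of_gt (hcpos m)
    have heq : ((c m : ℝ) : 𝕜) • e m - w'
        = ((c m : ℝ) : 𝕜) • (e m - ((c m : ℝ) : 𝕜)⁻¹ • w') := by
      rw [smul_sub, smul_inv_smul₀ hc0]
    rw [heq, norm_smul, RCLike.norm_ofReal, abs_of_pos (hcpos m)]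
    have hmem : ((c m : ℝ) : 𝕜)⁻¹ • w' ∈ Y m := Submodule.smul_mem _ _ hw'
    have := hedist m _ hmem
    nlinarith [hcpos m]
  -- (E1) approximation of u inside Y (2k+1)
  have hE1 : ∀ k, ∃ w ∈ Y (2 * k + 1), ‖u - w‖ ≤ 4 * c (2 * k + 2) := by
    intro k
    refine ⟨∑ j ∈ Finset.range (k + 1), F j, ?_, ?_⟩
    · apply Submodule.sum_mem
      intro j hj
      simp only [Finset.mem_range] at hj
      simp only [hFdef]
      exact Submodule.smul_mem _ _ (hYmono (by omega) (hemem (2 * j)))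
    · have hsplit := Summable.sum_add_tsum_nat_add (f := F) (k + 1) hFsum
      have h1 : u - ∑ j ∈ Finset.range (k + 1), F j = ∑' i, F (i + (k + 1)) := by
        rw [hudef, ← hsplit]; abel
      rw [h1]
      have := hFtail (k + 1)
      have h2 : 2 * (k + 1) = 2 * k + 2 := by ring
      rw [h2] at this
      exact this
  -- (E1') approximation of v inside Y (2k)
  have hE1' : ∀ k, ∃ w ∈ Y (2 * k), ‖v - w‖ ≤ 4 * c (2 * k + 1) := by
    intro k
    refine ⟨∑ j ∈ Finset.range k, G j, ?_, ?_⟩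
    · apply Submodule.sum_mem
      intro j hj
      simp only [Finset.mem_range] at hj
      simp only [hGdef]
      exact Submodule.smul_mem _ _ (hYmono (by omega) (hemem (2 * j + 1)))
    · have hsplit := Summable.sum_add_tsum_nat_add (f := G) k hGsum
      have h1 : v - ∑ j ∈ Finset.range k, G j = ∑' i, G (i + k) := by
        rw [hvdef, ← hsplit]; abel
      rw [h1]
      exact hGtail k
  -- (E2) v stays far from Y (2k+1)
  have hE2 : ∀ k, ∀ w ∈ Y (2 * k + 1), c (2 * k + 1) / 2 ≤ ‖v - w‖ := by
    intro k w hw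
    have hsplit := Summable.sum_add_tsum_nat_add (f := G) (k + 1) hGsum
    set T : X := ∑' i, G (i + (k + 1)) with hT
    set H : X := ∑ j ∈ Finset.range k, G j with hH
    have hHmem : H ∈ Y (2 * k + 1) := by
      apply Submodule.sum_mem
      intro j hj
      simp only [Finset.mem_range] at hj
      simp only [hGdef]
      exact Submodule.smul_mem _ _ (hYmono (by omega) (hemem (2 * j + 1)))
    have hv' : v = H + G k + T := by
      rw [hvdef, ← hsplit, Finset.sum_range_succ]
    have hTnorm : ‖T‖ ≤ 4 * c (2 * k + 3) := by
      have := hGtail (k + 1)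
      have h2 : 2 * (k + 1) + 1 = 2 * k + 3 := by ring
      rw [h2] at this
      exact this
    have hGk : c (2 * k + 1) ≤ ‖G k - (w - H)‖ := by
      have hmem : w - H ∈ Y (2 * k + 1) := Submodule.sub_mem _ hw hHmem
      exact hkey (2 * k + 1) _ hmem
    have heq : G k - (w - H) = (v - w) - T := by rw [hv']; abel
    have h3 : ‖G k - (w - H)‖ ≤ ‖v - w‖ + ‖T‖ := by
      rw [heq]; exact norm_sub_le _ _
    have hc3 : c (2 * k + 3) ≤ 16⁻¹ * (16⁻¹ * c (2 * k + 1)) := by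
      have a1 := hcstep (2 * k + 2)
      have a2 := hcstep (2 * k + 1)
      have h16 : (0:ℝ) < 16⁻¹ := by norm_num
      nlinarith
    nlinarith [hcpos (2 * k + 1)]
  -- (E2') u stays far from Y (2k)
  have hE2' : ∀ k, ∀ w ∈ Y (2 * k), c (2 * k) / 2 ≤ ‖u - w‖ := by
    intro k w hw
    have hsplit := Summable.sum_add_tsum_nat_add (f := F) (k + 1) hFsum
    set T : X := ∑' i, F (i + (k + 1)) with hT
    set H : X := ∑ j ∈ Finset.range k, F j with hH
    have hHmem : H ∈ Y (2 * k) := by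
      apply Submodule.sum_mem
      intro j hj
      simp only [Finset.mem_range] at hj
      simp only [hFdef]
      exact Submodule.smul_mem _ _ (hYmono (by omega) (hemem (2 * j)))
    have hu' : u = H + F k + T := by
      rw [hudef, ← hsplit, Finset.sum_range_succ]
    have hTnorm : ‖T‖ ≤ 4 * c (2 * k + 2) := by
      have := hFtail (k + 1)
      have h2 : 2 * (k + 1) = 2 * k + 2 := by ring
      rw [h2] at this
      exact this
    have hFk : c (2 * k) ≤ ‖F k - (w - H)‖ := by
      have hmem : w - H ∈ Y (2 * k) := Submodule.sub_mem _ hw hHmem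
      exact hkey (2 * k) _ hmem
    have heq : F k - (w - H) = (u - w) - T := by rw [hu']; abel
    have h3 : ‖F k - (w - H)‖ ≤ ‖u - w‖ + ‖T‖ := by
      rw [heq]; exact norm_sub_le _ _
    have hc3 : c (2 * k + 2) ≤ 16⁻¹ * (16⁻¹ * c (2 * k)) := by
      have a1 := hcstep (2 * k + 1)
      have a2 := hcstep (2 * k)
      have h16 : (0:ℝ) < 16⁻¹ := by norm_num
      nlinarith
    nlinarith [hcpos (2 * k)]
  -- u and v are nonzero
  have hu0 : u ≠ 0 := by
    intro h0
    have := hE2' 0 0 (Submodule.zero_mem _)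
    rw [h0] at this
    simp only [sub_zero, norm_zero] at this
    nlinarith [hcpos 0]
  have hv0 : v ≠ 0 := by
    intro h0
    have := hE2 0 0 (Submodule.zero_mem _)
    rw [h0] at this
    simp only [sub_zero, norm_zero] at this
    nlinarith [hcpos 1]
  -- apply strict semi-transitivity
  obtain ⟨A, hA𝔄, hAcase⟩ := hsst u v hu0 hv0
  obtain ⟨k, hk⟩ := pow_unbounded_of_one_lt (8 * ‖A‖) (show (1:ℝ) < 16 by norm_num)
  have h16pow : ∀ m : ℕ, k ≤ m → (8:ℝ) * ‖A‖ < 16 ^ m := by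
    intro m hm
    calc (8:ℝ) * ‖A‖ < 16 ^ k := hk
      _ ≤ 16 ^ m := pow_le_pow_right₀ (by norm_num) hm
  have hinvpow : ∀ m : ℕ, ((16:ℝ)⁻¹) ^ m * 16 ^ m = 1 := by
    intro m
    rw [← mul_pow]
    norm_num
  rcases hAcase with hAu | hAv
  · -- A u = v
    obtain ⟨w, hwmem, hwle⟩ := hE1 k
    have hAw : A w ∈ Y (2 * k + 1) := hYinv _ A hA𝔄 w hwmem
    have h1 : c (2 * k + 1) / 2 ≤ ‖v - A w‖ := hE2 k _ hAw
    have h2 : ‖v - A w‖ ≤ ‖A‖ * (4 * c (2 * k + 2)) := by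
      calc ‖v - A w‖ = ‖A (u - w)‖ := by rw [map_sub, hAu]
        _ ≤ ‖A‖ * ‖u - w‖ := A.le_opNorm _
        _ ≤ ‖A‖ * (4 * c (2 * k + 2)) :=
            mul_le_mul_of_nonneg_left hwle (norm_nonneg A)
    have hq := hcsucc (2 * k + 1)
    have hqP : ((16:ℝ)⁻¹) ^ (2 * (2 * k + 1) + 1) * (16:ℝ) ^ (2 * (2 * k + 1) + 1) = 1 :=
      hinvpow _
    have hbig : 8 * ‖A‖ < (16:ℝ) ^ (2 * (2 * k + 1) + 1) := h16pow _ (by omega)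
    have hP : (0:ℝ) < (16:ℝ) ^ (2 * (2 * k + 1) + 1) := by positivity
    have h4 : c (2 * k + 1) / 2
        ≤ ‖A‖ * (4 * (c (2 * k + 1) * (16⁻¹:ℝ) ^ (2 * (2 * k + 1) + 1))) := by
      rw [← hq]; linarith
    have h5 := mul_le_mul_of_nonneg_right h4 (le_of_lt hP)
    have h6 : ‖A‖ * (4 * (c (2 * k + 1) * (16⁻¹:ℝ) ^ (2 * (2 * k + 1) + 1)))
          * (16:ℝ) ^ (2 * (2 * k + 1) + 1)
        = 4 * ‖A‖ * c (2 * k + 1)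
          * (((16:ℝ)⁻¹) ^ (2 * (2 * k + 1) + 1) * (16:ℝ) ^ (2 * (2 * k + 1) + 1)) := by
      ring
    rw [h6, hqP, mul_one] at h5
    have h7 := mul_lt_mul_of_pos_right hbig (hcpos (2 * k + 1))
    nlinarith [h5, h7]
  · -- A v = u
    obtain ⟨w, hwmem, hwle⟩ := hE1' k
    have hAw : A w ∈ Y (2 * k) := hYinv _ A hA𝔄 w hwmem
    have h1 : c (2 * k) / 2 ≤ ‖u - A w‖ := hE2' k _ hAw
    have h2 : ‖u - A w‖ ≤ ‖A‖ * (4 * c (2 * k + 1)) := by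
      calc ‖u - A w‖ = ‖A (v - w)‖ := by rw [map_sub, hAv]
        _ ≤ ‖A‖ * ‖v - w‖ := A.le_opNorm _
        _ ≤ ‖A‖ * (4 * c (2 * k + 1)) :=
            mul_le_mul_of_nonneg_left hwle (norm_nonneg A)
    have hq := hcsucc (2 * k)
    have hqP : ((16:ℝ)⁻¹) ^ (2 * (2 * k) + 1) * (16:ℝ) ^ (2 * (2 * k) + 1) = 1 :=
      hinvpow _
    have hbig : 8 * ‖A‖ < (16:ℝ) ^ (2 * (2 * k) + 1) := h16pow _ (by omega)
    have hP : (0:ℝ) < (16:ℝ) ^ (2 * (2 * k) + 1) := by positivity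
    have h4 : c (2 * k) / 2
        ≤ ‖A‖ * (4 * (c (2 * k) * (16⁻¹:ℝ) ^ (2 * (2 * k) + 1))) := by
      rw [← hq]; linarith
    have h5 := mul_le_mul_of_nonneg_right h4 (le_of_lt hP)
    have h6 : ‖A‖ * (4 * (c (2 * k) * (16⁻¹:ℝ) ^ (2 * (2 * k) + 1)))
          * (16:ℝ) ^ (2 * (2 * k) + 1)
        = 4 * ‖A‖ * c (2 * k)
          * (((16:ℝ)⁻¹) ^ (2 * (2 * k) + 1) * (16:ℝ) ^ (2 * (2 * k) + 1)) := by
      ring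
    rw [h6, hqP, mul_one] at h5
    have h7 := mul_lt_mul_of_pos_right hbig (hcpos (2 * k))
    nlinarith [h5, h7]
end

section
/- Let X be a Banach space and 𝔄 a unital, norm-closed, strictly semi-transitive subalgebra of L(X). Then every 𝔄-invariant linear subspace Y of X (not assumed closed) is closed, and moreover Y = 𝔄x for some x ∈ X. -/
/-!
Let `N` be the closure of `Y` and `𝔄ᵣ w = {A w | A ∈ 𝔄, ‖A‖ ≤ r}` (`boundedOrbit 𝔄 r w`).
Strict semi-transitivity says that the closed sets
`{(v, z) | v ∈ closure (𝔄ₙ z) ∨ z ∈ closure (𝔄ₙ v)}`, `n ∈ ℕ`, cover `N × N`, so by Baire one of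
them contains a product of open sets `V × W`. If no `closure (𝔄ₙ z)` had interior in `N`, then
for every `z ∈ W` the closed set `{v | z ∈ closure (𝔄ₙ v)}` would contain `V` minus the nowhere
dense `closure (𝔄ₙ z)`, hence all of `V`; so `W ⊆ closure (𝔄ₙ v)` for `v ∈ V`, a contradiction.
So some `closure (𝔄ₙ w)` contains a ball of `N`, and the iteration from the proof of the open
mapping theorem (which needs `𝔄` closed) makes `A ↦ A w` map `𝔄` onto `N` with a norm bound.
That bound survives replacing `w` by a nearby `y ∈ Y`, so `N = 𝔄 y ⊆ Y`.
-/

open Metric Set Filter Topology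

theorem exists_nonempty_interior_of_forall_or {T : Type*} [PseudoMetricSpace T] [CompleteSpace T]
    [Nonempty T] {r : ℕ → T → T → Prop} (hr : ∀ n, IsClosed {p : T × T | r n p.1 p.2})
    (htotal : ∀ v z, ∃ n, r n v z ∨ r n z v) :
    ∃ n w, (interior {z | r n z w}).Nonempty := by
  by_contra! hempty
  obtain ⟨n, p, hp⟩ := nonempty_interior_of_iUnion_of_closed
    (f := fun n => {p : T × T | r n p.1 p.2 ∨ r n p.2 p.1})
    (fun n => (hr n).union ((hr n).preimage continuous_swap))
    (iUnion_eq_univ_iff.2 fun p => htotal p.1 p.2)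
  obtain ⟨V, W, hV, hW, hpV, hpW, hVW⟩ := isOpen_prod_iff.1 isOpen_interior p.1 p.2 hp
  have hsub : W ⊆ {z | r n z p.1} := by
    intro z hz
    have hdense : Dense {v | r n v z}ᶜ := interior_eq_empty_iff_dense_compl.1 (hempty n z)
    have hV_sub : V ∩ {v | r n v z}ᶜ ⊆ {v | r n z v} := fun v ⟨hv, hvz⟩ =>
      (interior_subset (s := {p : T × T | r n p.1 p.2 ∨ r n p.2 p.1})
        (hVW (mk_mem_prod hv hz))).resolve_left hvz
    exact closure_minimal hV_sub ((hr n).preimage (continuous_const.prodMk continuous_id))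
      (hdense.open_subset_closure_inter hV hpV)
  exact (hempty n p.1).subset (interior_maximal hsub hW hpW)

section BoundedOrbit

variable {𝕜 X : Type*} [NontriviallyNormedField 𝕜] [NormedAddCommGroup X] [NormedSpace 𝕜 X]
  (𝔄 : Submodule 𝕜 (X →L[𝕜] X))

def boundedOrbit (r : ℝ) (x : X) : Set X :=
  {y | ∃ A ∈ 𝔄, ‖A‖ ≤ r ∧ A x = y}

variable {𝔄}

theorem zero_mem_boundedOrbit {r : ℝ} (hr : 0 ≤ r) (x : X) : 0 ∈ boundedOrbit 𝔄 r x :=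
  ⟨0, 𝔄.zero_mem, by simpa using hr, rfl⟩

theorem boundedOrbit_mono {r s : ℝ} (h : r ≤ s) (x : X) :
    boundedOrbit 𝔄 r x ⊆ boundedOrbit 𝔄 s x := fun _ ⟨A, hA, hAr, hAx⟩ =>
  ⟨A, hA, hAr.trans h, hAx⟩

theorem sub_mem_closure_boundedOrbit {r s : ℝ} {x a b : X}
    (ha : a ∈ closure (boundedOrbit 𝔄 r x)) (hb : b ∈ closure (boundedOrbit 𝔄 s x)) :
    a - b ∈ closure (boundedOrbit 𝔄 (r + s) x) :=
  map_mem_closure₂ continuous_sub ha hb fun _ ⟨A, hA, hAr, hAx⟩ _ ⟨B, hB, hBs, hBx⟩ =>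
    ⟨A - B, 𝔄.sub_mem hA hB, (norm_sub_le A B).trans (add_le_add hAr hBs), by
      rw [← hAx, ← hBx, sub_apply]⟩

theorem smul_mem_closure_boundedOrbit {r : ℝ} {x a : X} (c : 𝕜)
    (ha : a ∈ closure (boundedOrbit 𝔄 r x)) : c • a ∈ closure (boundedOrbit 𝔄 (‖c‖ * r) x) :=
  map_mem_closure (continuous_const_smul c) ha fun _ ⟨A, hA, hAr, hAx⟩ =>
    ⟨c • A, 𝔄.smul_mem c hA, (norm_smul c A).trans_le (by gcongr), by
      rw [← hAx, smul_apply]⟩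

theorem isClosed_setOf_mem_closure_boundedOrbit {r : ℝ} (hr : 0 ≤ r) :
    IsClosed {p : X × X | p.1 ∈ closure (boundedOrbit 𝔄 r p.2)} := by
  refine isClosed_of_closure_subset fun p hp => Metric.mem_closure_iff.2 fun ε hε => ?_
  set δ := ε / (r + 2)
  have hδ : 0 < δ := by positivity
  obtain ⟨q, hq, hpq⟩ := Metric.mem_closure_iff.1 hp δ hδ
  obtain ⟨_, ⟨A, hA, hAr, rfl⟩, hqA⟩ := Metric.mem_closure_iff.1 hq δ hδ
  refine ⟨A p.2, ⟨A, hA, hAr, rfl⟩, ?_⟩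
  rw [Prod.dist_eq, max_lt_iff] at hpq
  obtain ⟨h₁, h₂⟩ := hpq
  have hA₂ : dist (A q.2) (A p.2) ≤ r * δ :=
    calc dist (A q.2) (A p.2) ≤ ‖A‖ * dist q.2 p.2 := A.lipschitz.dist_le_mul _ _
      _ ≤ r * δ := by rw [dist_comm] at h₂; gcongr
  calc dist p.1 (A p.2) ≤ dist p.1 q.1 + dist q.1 (A q.2) + dist (A q.2) (A p.2) :=
        dist_triangle4 _ _ _ _
    _ < δ + δ + r * δ := by linarith
    _ = δ * (r + 2) := by ring
    _ = ε := div_mul_cancel₀ ε (by positivity)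

theorem forall_mem_boundedOrbit_of_approx [CompleteSpace X]
    (h𝔄 : IsClosed (𝔄 : Set (X →L[𝕜] X))) {N : Submodule 𝕜 X}
    (hN : ∀ A ∈ 𝔄, ∀ v ∈ N, A v ∈ N) {x : X} (hx : x ∈ N) {K : ℝ} (hK : 0 ≤ K)
    (happrox : ∀ v ∈ N, ∃ A ∈ 𝔄, ‖A‖ ≤ K * ‖v‖ ∧ ‖A x - v‖ ≤ ‖v‖ / 2) :
    ∀ v ∈ N, v ∈ boundedOrbit 𝔄 (2 * K * ‖v‖) x := by
  choose! g hg𝔄 hg_norm hg_approx using happrox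
  intro v hv
  set h : X → X := fun u => u - g u x
  have hmem : ∀ n, h^[n] v ∈ N := by
    intro n
    induction n with
    | zero => exact hv
    | succ n ih =>
      rw [Function.iterate_succ_apply']
      exact N.sub_mem ih (hN _ (hg𝔄 _ ih) x hx)
  have hres : ∀ n, ‖h^[n] v‖ ≤ (1 / 2) ^ n * ‖v‖ := by
    intro n
    induction n with
    | zero => simp
    | succ n ih =>
      rw [Function.iterate_succ_apply', pow_succ]
      calc ‖h^[n] v - g (h^[n] v) x‖ ≤ ‖h^[n] v‖ / 2 := by
            rw [norm_sub_rev]; exact hg_approx _ (hmem n)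
        _ ≤ (1 / 2) ^ n * ‖v‖ / 2 := by gcongr
        _ = (1 / 2) ^ n * (1 / 2) * ‖v‖ := by ring
  set A : ℕ → X →L[𝕜] X := fun n => g (h^[n] v)
  have hA : ∀ n, ‖A n‖ ≤ (1 / 2) ^ n * (K * ‖v‖) := fun n =>
    calc ‖A n‖ ≤ K * ‖h^[n] v‖ := hg_norm _ (hmem n)
      _ ≤ K * ((1 / 2) ^ n * ‖v‖) := by gcongr; exact hres n
      _ = (1 / 2) ^ n * (K * ‖v‖) := by ring
  have hgeom : HasSum (fun n : ℕ => (1 / 2 : ℝ) ^ n * (K * ‖v‖)) (2 * K * ‖v‖) := by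
    simpa [mul_assoc] using hasSum_geometric_two.mul_right (K * ‖v‖)
  have hAsum : HasSum A (∑' n, A n) := (Summable.of_norm_bounded hgeom.summable hA).hasSum
  have htelescope : ∀ n, (∑ k ∈ Finset.range n, A k) x = v - h^[n] v := by
    intro n
    induction n with
    | zero => simp
    | succ n ih =>
      rw [Finset.sum_range_succ, add_apply, ih, Function.iterate_succ_apply']
      simp only [h, A]
      abel
  have hlim : Tendsto (fun n => (∑ k ∈ Finset.range n, A k) x) atTop (𝓝 v) := by
    simp only [htelescope]
    have hgeom_lim : Tendsto (fun n : ℕ => (1 / 2 : ℝ) ^ n * ‖v‖) atTop (𝓝 0) := by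
      simpa using (tendsto_pow_atTop_nhds_zero_of_lt_one (by norm_num)
        (by norm_num : (1 / 2 : ℝ) < 1)).mul_const ‖v‖
    simpa using tendsto_const_nhds.sub (squeeze_zero_norm hres hgeom_lim)
  refine ⟨∑' n, A n, ?_, tsum_of_norm_bounded hgeom hA, ?_⟩
  · exact h𝔄.mem_of_tendsto hAsum.tendsto_sum_nat
      (Eventually.of_forall fun n => 𝔄.sum_mem fun k _ => hg𝔄 _ (hmem k))
  · refine tendsto_nhds_unique ?_ hlim
    simpa using (hAsum.mapL (ContinuousLinearMap.apply 𝕜 X x)).tendsto_sum_nat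

theorem exists_nat_mem_boundedOrbit_or
    (hsst : ∀ x y : X, x ≠ 0 → y ≠ 0 → ∃ A ∈ 𝔄, A x = y ∨ A y = x) (v z : X) :
    ∃ n : ℕ, v ∈ boundedOrbit 𝔄 n z ∨ z ∈ boundedOrbit 𝔄 n v := by
  rcases eq_or_ne v 0 with rfl | hv
  · exact ⟨0, .inl (zero_mem_boundedOrbit (Nat.cast_nonneg 0) z)⟩
  rcases eq_or_ne z 0 with rfl | hz
  · exact ⟨0, .inr (zero_mem_boundedOrbit (Nat.cast_nonneg 0) v)⟩
  obtain ⟨A, hA, hAzv | hAvz⟩ := hsst z v hz hv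
  · exact ⟨⌈‖A‖⌉₊, .inl ⟨A, hA, Nat.le_ceil _, hAzv⟩⟩
  · exact ⟨⌈‖A‖⌉₊, .inr ⟨A, hA, Nat.le_ceil _, hAvz⟩⟩

theorem exists_forall_mem_closure_boundedOrbit {N : Submodule 𝕜 X} {r ρ : ℝ} {x z₀ : X}
    (hz₀ : z₀ ∈ N) (hρ : 0 < ρ) (hr : 0 ≤ r)
    (hball : ∀ u ∈ N, dist u z₀ < ρ → u ∈ closure (boundedOrbit 𝔄 r x)) :
    ∃ K, 0 ≤ K ∧ ∀ u ∈ N, u ∈ closure (boundedOrbit 𝔄 (K * ‖u‖) x) := by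
  obtain ⟨c, hc⟩ := NormedField.exists_one_lt_norm 𝕜
  refine ⟨ρ⁻¹ * ‖c‖ * (r + r), by positivity, fun u hu => ?_⟩
  rcases eq_or_ne u 0 with rfl | hu0
  · simpa using subset_closure (zero_mem_boundedOrbit le_rfl x)
  obtain ⟨d, hd, hdu, -, hdinv⟩ := rescale_to_shell hc hρ hu0
  have hdu_mem : d • u ∈ closure (boundedOrbit 𝔄 (r + r) x) := by
    have h₁ := hball (z₀ + d • u) (N.add_mem hz₀ (N.smul_mem d hu))
      (by simpa [dist_eq_norm] using hdu)
    have h₀ := hball z₀ hz₀ (by simpa using hρ)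
    simpa using sub_mem_closure_boundedOrbit h₁ h₀
  have hu_mem := smul_mem_closure_boundedOrbit d⁻¹ hdu_mem
  rw [inv_smul_smul₀ hd] at hu_mem
  refine closure_mono (boundedOrbit_mono ?_ x) hu_mem
  rw [norm_inv]
  calc ‖d‖⁻¹ * (r + r) ≤ ρ⁻¹ * ‖c‖ * ‖u‖ * (r + r) := by gcongr
    _ = ρ⁻¹ * ‖c‖ * (r + r) * ‖u‖ := by ring

theorem approx_of_forall_mem_closure_boundedOrbit {N : Submodule 𝕜 X} {K : ℝ} {w : X}
    (hw : ∀ v ∈ N, v ∈ closure (boundedOrbit 𝔄 (K * ‖v‖) w)) :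
    ∀ v ∈ N, ∃ A ∈ 𝔄, ‖A‖ ≤ K * ‖v‖ ∧ ‖A w - v‖ ≤ ‖v‖ / 2 := by
  intro v hv
  rcases eq_or_ne v 0 with rfl | hv0
  · exact ⟨0, 𝔄.zero_mem, by simp, by simp⟩
  obtain ⟨_, ⟨A, hA, hAK, rfl⟩, hdist⟩ :=
    Metric.mem_closure_iff.1 (hw v hv) (‖v‖ / 2) (by positivity)
  exact ⟨A, hA, hAK, by rw [← dist_eq_norm, dist_comm]; exact hdist.le⟩

theorem approx_of_forall_mem_boundedOrbit {N : Submodule 𝕜 X} {K : ℝ} {w y : X}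
    (hw : ∀ v ∈ N, v ∈ boundedOrbit 𝔄 (K * ‖v‖) w) (hy : K * ‖y - w‖ ≤ 1 / 2) :
    ∀ v ∈ N, ∃ A ∈ 𝔄, ‖A‖ ≤ K * ‖v‖ ∧ ‖A y - v‖ ≤ ‖v‖ / 2 := by
  intro v hv
  obtain ⟨A, hA, hAK, rfl⟩ := hw v hv
  refine ⟨A, hA, hAK, ?_⟩
  calc ‖A y - A w‖ = ‖A (y - w)‖ := by rw [map_sub]
    _ ≤ ‖A‖ * ‖y - w‖ := A.le_opNorm _
    _ ≤ K * ‖A w‖ * ‖y - w‖ := by gcongr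
    _ = ‖A w‖ * (K * ‖y - w‖) := by ring
    _ ≤ ‖A w‖ * (1 / 2) := by gcongr
    _ = ‖A w‖ / 2 := by ring

theorem exists_mem_topologicalClosure_subset_orbit [CompleteSpace X]
    (h𝔄 : IsClosed (𝔄 : Set (X →L[𝕜] X)))
    (hsst : ∀ x y : X, x ≠ 0 → y ≠ 0 → ∃ A ∈ 𝔄, A x = y ∨ A y = x)
    {Y : Submodule 𝕜 X} (hY : ∀ A ∈ 𝔄, ∀ v ∈ Y, A v ∈ Y) :
    ∃ y ∈ Y, ∀ v ∈ Y.topologicalClosure, ∃ A ∈ 𝔄, A y = v := by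
  set N := Y.topologicalClosure
  have hN : ∀ A ∈ 𝔄, ∀ v ∈ N, A v ∈ N := fun A hA v hv =>
    map_mem_closure A.continuous hv (hY A hA)
  have : CompleteSpace N := Y.isClosed_topologicalClosure.completeSpace_coe
  obtain ⟨n, w, z₀, hz₀⟩ := exists_nonempty_interior_of_forall_or
    (r := fun n (v z : N) => (v : X) ∈ closure (boundedOrbit 𝔄 n z))
    (fun n => (isClosed_setOf_mem_closure_boundedOrbit n.cast_nonneg).preimage
      (continuous_subtype_val.prodMap continuous_subtype_val))
    (fun v z => (exists_nat_mem_boundedOrbit_or hsst v z).imp fun _ =>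
      Or.imp (subset_closure ·) (subset_closure ·))
  obtain ⟨ρ, hρ, hball⟩ := Metric.isOpen_iff.1 isOpen_interior z₀ hz₀
  obtain ⟨K, hK, hwK⟩ := exists_forall_mem_closure_boundedOrbit z₀.2 hρ n.cast_nonneg
    fun u hu hdist => (hball.trans interior_subset) (show (⟨u, hu⟩ : N) ∈ ball z₀ ρ from hdist)
  have hw := forall_mem_boundedOrbit_of_approx h𝔄 hN w.2 hK
    (approx_of_forall_mem_closure_boundedOrbit hwK)
  have hU : {y : X | 2 * K * ‖y - w‖ < 1 / 2} ∈ 𝓝 (w : X) :=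
    (isOpen_lt (by fun_prop) continuous_const).mem_nhds (by simp)
  obtain ⟨y, hyw, hyY⟩ := mem_closure_iff_nhds.1 w.2 _ hU
  have hy := forall_mem_boundedOrbit_of_approx h𝔄 hN (Y.le_topologicalClosure hyY)
    (by positivity) (approx_of_forall_mem_boundedOrbit hw hyw.le)
  exact ⟨y, hyY, fun v hv => (hy v hv).imp fun _ ⟨hA, _, hAy⟩ => ⟨hA, hAy⟩⟩

end BoundedOrbit

/-- Let `X` be a Banach space and `𝔄` a unital, norm-closed, strictly semi-transitive
subalgebra of `L(X)`.  Then every `𝔄`-invariant linear subspace `Y` of `X` (not assumed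
closed) is closed, and moreover `Y = 𝔄x` for some `x ∈ X`. -/
theorem stmt_14 {𝕜 X : Type*} [RCLike 𝕜]
    [NormedAddCommGroup X] [NormedSpace 𝕜 X] [CompleteSpace X]
    (𝔄 : Subalgebra 𝕜 (X →L[𝕜] X))
    (hclosed : IsClosed (𝔄 : Set (X →L[𝕜] X)))
    (hsst : ∀ x y : X, x ≠ 0 → y ≠ 0 → ∃ A ∈ 𝔄, A x = y ∨ A y = x)
    (Y : Submodule 𝕜 X)
    (hinv : ∀ A ∈ 𝔄, ∀ v ∈ Y, A v ∈ Y) :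
    IsClosed (Y : Set X) ∧ ∃ x : X, (Y : Set X) = {y : X | ∃ A ∈ 𝔄, A x = y} := by
  obtain ⟨x, hxY, hx⟩ :=
    exists_mem_topologicalClosure_subset_orbit (𝔄 := Subalgebra.toSubmodule 𝔄) hclosed hsst hinv
  have horbit : {y : X | ∃ A ∈ 𝔄, A x = y} ⊆ Y := fun _ ⟨A, hA, hAx⟩ => hAx ▸ hinv A hA x hxY
  exact ⟨closure_subset_iff_isClosed.1 fun v hv => horbit (hx v hv), x,
    Subset.antisymm (fun v hv => hx v (subset_closure hv)) horbit⟩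
end

section
/- Let X be a Banach space (real or complex) and let Y₁ and Y₂ be operator ranges in X. Then Y₁ + Y₂ and Y₁ ∩ Y₂ are operator ranges in X. -/
/-!
Writing `Yᵢ = range Tᵢ` with `Tᵢ : Mᵢ → X` and `Mᵢ ⊆ X^{nᵢ}` closed, the sum `Y₁ + Y₂` is the
range of `(m₁, m₂) ↦ T₁ m₁ + T₂ m₂` on `M₁ × M₂`, and `Y₁ ∩ Y₂` is the range of
`(m₁, m₂) ↦ T₁ m₁` on the kernel of `(m₁, m₂) ↦ T₁ m₁ - T₂ m₂`. Both domains are closed subspaces of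
`M₁ × M₂`, which is itself a closed subspace of `X^{n₁} × X^{n₂} ≅ X^{n₁ + n₂}`; and the range of any
operator on a space isomorphic to a closed subspace of `Xⁿ` is an operator range.
-/

/-- A linear subspace `Y` of a Banach space `X` is an *operator range* if there are
`n ≥ 1`, a closed subspace `M ⊆ Xⁿ`, and a bounded linear operator `T : M → X` with
`Y = range T`. -/
def IsOperatorRange (𝕜 : Type*) {X : Type*} [RCLike 𝕜]
    [NormedAddCommGroup X] [NormedSpace 𝕜 X] (Y : Submodule 𝕜 X) : Prop :=
  ∃ n : ℕ, 1 ≤ n ∧ ∃ M : Submodule 𝕜 (Fin n → X), IsClosed (M : Set (Fin n → X)) ∧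
    ∃ T : M →L[𝕜] X, (Y : Set X) = Set.range T

open Topology LinearMap

theorem LinearMap.range_inf_range {R M N P : Type*} [Ring R] [AddCommGroup M] [Module R M]
    [AddCommGroup N] [Module R N] [AddCommGroup P] [Module R P] (f : M →ₗ[R] P) (g : N →ₗ[R] P) :
    range f ⊓ range g = range (f ∘ₗ fst R M N ∘ₗ (ker (f.coprod (-g))).subtype) := by
  ext x
  constructor
  · rintro ⟨⟨a, rfl⟩, b, hb⟩
    exact ⟨⟨(a, b), by simp [hb]⟩, rfl⟩
  · rintro ⟨⟨⟨a, b⟩, hab⟩, rfl⟩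
    rw [mem_ker, coprod_apply, neg_apply, ← sub_eq_add_neg, sub_eq_zero] at hab
    exact ⟨⟨a, rfl⟩, b, hab.symm⟩

section OperatorRange

variable {𝕜 X : Type*} [RCLike 𝕜] [NormedAddCommGroup X] [NormedSpace 𝕜 X]

theorem IsOperatorRange.exists_eq_range {Y : Submodule 𝕜 X} (h : IsOperatorRange 𝕜 Y) :
    ∃ n, 1 ≤ n ∧ ∃ M : Submodule 𝕜 (Fin n → X), IsClosed (M : Set (Fin n → X)) ∧
      ∃ T : M →L[𝕜] X, Y = T.range := by
  obtain ⟨n, hn, M, hM, T, hT⟩ := h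
  exact ⟨n, hn, M, hM, T, SetLike.coe_injective (hT.trans (coe_range _).symm)⟩

theorem isOperatorRange_range_of_isClosedEmbedding {E : Type*} [NormedAddCommGroup E]
    [NormedSpace 𝕜 E] {n : ℕ} (hn : 1 ≤ n) {f : E →L[𝕜] Fin n → X} (hf : IsClosedEmbedding f)
    (T : E →L[𝕜] X) : IsOperatorRange 𝕜 T.range := by
  let e := LinearEquiv.ofInjective (f : E →ₗ[𝕜] Fin n → X) hf.injective
  have he : Continuous e.symm := by
    rw [hf.isEmbedding.continuous_iff]
    convert continuous_subtype_val
    ext1 y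
    exact LinearEquiv.ofInjective_symm_apply (f := (f : E →ₗ[𝕜] Fin n → X)) y
  let g : f.range →L[𝕜] E := ⟨e.symm, he⟩
  have hg : Function.Surjective g := e.symm.surjective
  refine ⟨n, hn, f.range, ?_, T.comp g, ?_⟩
  · rw [coe_range, ContinuousLinearMap.coe_coe]
    exact hf.isClosed_range
  · rw [coe_range, ContinuousLinearMap.coe_comp, hg.range_comp]
    rfl

theorem exists_isClosedEmbedding_prod {n₁ n₂ : ℕ} {M₁ : Submodule 𝕜 (Fin n₁ → X)}
    {M₂ : Submodule 𝕜 (Fin n₂ → X)} (h₁ : IsClosed (M₁ : Set (Fin n₁ → X)))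
    (h₂ : IsClosed (M₂ : Set (Fin n₂ → X))) :
    ∃ f : (M₁ × M₂) →L[𝕜] Fin (n₁ + n₂) → X, IsClosedEmbedding f := by
  let e : ((Fin n₁ → X) × (Fin n₂ → X)) ≃L[𝕜] Fin (n₁ + n₂) → X :=
    ((ContinuousLinearEquiv.piCongrLeft 𝕜 (fun _ => X) finSumFinEquiv).symm.trans
      (ContinuousLinearEquiv.sumPiEquivProdPi 𝕜 (Fin n₁) (Fin n₂) fun _ => X)).symm
  exact ⟨e.toContinuousLinearMap.comp (M₁.subtypeL.prodMap M₂.subtypeL),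
    e.toHomeomorph.isClosedEmbedding.comp
      (h₁.isClosedEmbedding_subtypeVal.prodMap h₂.isClosedEmbedding_subtypeVal)⟩

end OperatorRange

theorem stmt_17_general {𝕜 X : Type*} [RCLike 𝕜]
    [NormedAddCommGroup X] [NormedSpace 𝕜 X]
    (Y₁ Y₂ : Submodule 𝕜 X)
    (h₁ : IsOperatorRange 𝕜 Y₁) (h₂ : IsOperatorRange 𝕜 Y₂) :
    IsOperatorRange 𝕜 (Y₁ ⊔ Y₂) ∧ IsOperatorRange 𝕜 (Y₁ ⊓ Y₂) := by
  obtain ⟨n₁, hn₁, M₁, hM₁, T₁, rfl⟩ := h₁.exists_eq_range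
  obtain ⟨n₂, -, M₂, hM₂, T₂, rfl⟩ := h₂.exists_eq_range
  obtain ⟨f, hf⟩ := exists_isClosedEmbedding_prod hM₁ hM₂
  have hn : 1 ≤ n₁ + n₂ := by omega
  constructor
  · rw [← ContinuousLinearMap.range_coprod]
    exact isOperatorRange_range_of_isClosedEmbedding hn hf _
  · let K := (T₁.coprod (-T₂)).ker
    have hK : IsClosedEmbedding (f.comp K.subtypeL) :=
      hf.comp (ContinuousLinearMap.isClosed_ker _).isClosedEmbedding_subtypeVal
    rw [LinearMap.range_inf_range]
    exact isOperatorRange_range_of_isClosedEmbedding (E := K) hn hK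
      ((T₁.comp (.fst 𝕜 M₁ M₂)).comp K.subtypeL)

/-- Let `X` be a Banach space (real or complex) and `Y₁`, `Y₂` operator ranges in `X`.
Then `Y₁ + Y₂` and `Y₁ ∩ Y₂` are operator ranges in `X`. -/
theorem stmt_17 {𝕜 X : Type*} [RCLike 𝕜]
    [NormedAddCommGroup X] [NormedSpace 𝕜 X] [CompleteSpace X]
    (Y₁ Y₂ : Submodule 𝕜 X)
    (h₁ : IsOperatorRange 𝕜 Y₁) (h₂ : IsOperatorRange 𝕜 Y₂) :
    IsOperatorRange 𝕜 (Y₁ ⊔ Y₂) ∧ IsOperatorRange 𝕜 (Y₁ ⊓ Y₂) :=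
  stmt_17_general Y₁ Y₂ h₁ h₂
end
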